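/- arXiv:math/0212258 — 2 statements merged into one kernel-verified Lean document; each statement's English description precedes it below -/
import Mathlib

section
/- Let (Γ_1,Γ_2,T) be a BD triple and s ∈ h∧h admissible. Suppose r(u,v) is a solution of the AYBE with a Laurent expansion of the first kind at u = 0, r(u,v) = (1⊗1)/u + Σ_{k≥0} u^k r_k(v), whose zero-order term is r₀(v) = (r_{T,s} + e^v·r_{T,s}^{21})/(1 − e^v). Then (pr⊗pr⊗pr)[ r_{T,s}^{12}·r_{T,s}^{13} − r_{T,s}^{23}·r_{T,s}^{12} + r_{T,s}^{13}·r_{T,s}^{23} ] = 0. -/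
open Complex

/-- `Matₙ(ℂ)` -/
abbrev M1 (n : ℕ) := Matrix (Fin n) (Fin n) ℂ
/-- `Matₙ ⊗ Matₙ`, realized as matrices indexed by pairs (Kronecker indexing). -/
abbrev M2 (n : ℕ) := Matrix (Fin n × Fin n) (Fin n × Fin n) ℂ
/-- `Matₙ ⊗ Matₙ ⊗ Matₙ`. -/
abbrev M3 (n : ℕ) := Matrix (Fin n × Fin n × Fin n) (Fin n × Fin n × Fin n) ℂ

/-- matrix unit `e_{ij}` (ℕ-indexed, zero if out of range) -/
def Eu (n : ℕ) (i j : ℕ) : M1 n := fun a b => if (a : ℕ) = i ∧ (b : ℕ) = j then 1 else 0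

/-- Kronecker/tensor product of two matrices: `a ⊗ b`. -/
def tens {n : ℕ} (a b : M1 n) : M2 n := fun p q => a p.1 q.1 * b p.2 q.2

/-- `x ↦ x^{12}` -/
def emb12 {n : ℕ} (x : M2 n) : M3 n :=
  fun p q => x (p.1, p.2.1) (q.1, q.2.1) * (if p.2.2 = q.2.2 then 1 else 0)
/-- `x ↦ x^{13}` -/
def emb13 {n : ℕ} (x : M2 n) : M3 n :=
  fun p q => x (p.1, p.2.2) (q.1, q.2.2) * (if p.2.1 = q.2.1 then 1 else 0)
/-- `x ↦ x^{23}` -/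
def emb23 {n : ℕ} (x : M2 n) : M3 n :=
  fun p q => x (p.2.1, p.2.2) (q.2.1, q.2.2) * (if p.1 = q.1 then 1 else 0)
/-- `x ↦ x^{21}` (flip of the two tensor factors) -/
def flipT {n : ℕ} (x : M2 n) : M2 n := fun p q => x (p.2, p.1) (q.2, q.1)

/-- The permutation matrix `P = Σ_{i,j} e_{ij} ⊗ e_{ji}`. -/
def Pmat (n : ℕ) : M2 n := fun p q => if p.1 = q.2 ∧ p.2 = q.1 then 1 else 0

/-- Left-hand side of the AYBE with two spectral parameters. -/
noncomputable def aybeLHS {n : ℕ} (r : ℂ → ℂ → M2 n) (u u' v v' : ℂ) : M3 n :=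
  emb12 (r (-u') v) * emb13 (r (u + u') (v + v'))
    - emb23 (r (u + u') v') * emb12 (r u v)
    + emb13 (r u (v + v')) * emb23 (r u' v')

/-- Left-hand side of the CYBE with spectral parameter. -/
noncomputable def cybeLHS {n : ℕ} (f : ℂ → M2 n) (v v' : ℂ) : M3 n :=
  (emb12 (f v) * emb13 (f (v + v')) - emb13 (f (v + v')) * emb12 (f v))
    + (emb12 (f v) * emb23 (f v') - emb23 (f v') * emb12 (f v))
    + (emb13 (f (v + v')) * emb23 (f v') - emb23 (f v') * emb13 (f (v + v')))


/-! ### Belavin–Drinfeld combinatorics (0-based indexing: simple roots `α_a = e_a - e_{a+1}`,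
`a ∈ {0,…,n-2}`; the positive root `e_i - e_j` (`i < j < n`) is encoded by the pair `(i,j)`). -/

/-- inner product of simple roots `α_a, α_b` in type `A`. -/
def ipS (a b : ℕ) : ℤ := if a = b then 2 else if a + 1 = b ∨ b + 1 = a then -1 else 0

/-- A Belavin–Drinfeld triple `(Γ₁, Γ₂, T)` of type `A_{n-1}` (simple roots 0-based). -/
structure BDTriple (n : ℕ) where
  G1 : Finset ℕ
  G2 : Finset ℕ
  hG1 : ∀ a ∈ G1, a + 1 < n
  hG2 : ∀ a ∈ G2, a + 1 < n
  T : ℕ → ℕ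
  Tmem : ∀ a ∈ G1, T a ∈ G2
  Tinj : ∀ a ∈ G1, ∀ b ∈ G1, T a = T b → a = b
  Tsurj : ∀ b ∈ G2, ∃ a ∈ G1, T a = b
  Tip : ∀ a ∈ G1, ∀ b ∈ G1, ipS (T a) (T b) = ipS a b
  Tnil : ∀ a ∈ G1, ∃ k : ℕ, T^[k] a ∉ G1

/-- `(i,j)` encodes the positive root `e_i - e_j`. -/
def IsRoot (n : ℕ) (p : ℕ × ℕ) : Prop := p.1 < p.2 ∧ p.2 < n

/-- One application of (the additive extension of) `T` sends the root `p` to the root `q`: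
all simple constituents of `p` lie in `Γ₁` and their `T`-images form the segment of `q`. -/
def step {n : ℕ} (D : BDTriple n) (p q : ℕ × ℕ) : Prop :=
  IsRoot n p ∧ IsRoot n q ∧ (Finset.Ico p.1 p.2 ⊆ D.G1) ∧
    Finset.image D.T (Finset.Ico p.1 p.2) = Finset.Ico q.1 q.2

/-- `stepIter D k p q` means `T^k p = q` (all intermediate iterates being defined). -/
def stepIter {n : ℕ} (D : BDTriple n) : ℕ → ℕ × ℕ → ℕ × ℕ → Prop
  | 0, p, q => p = q
  | k + 1, p, q => ∃ r, step D p r ∧ stepIter D k r q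

/-- `α ≺ β` : `T^k α = β` for some `k ≥ 1`. -/
def prec {n : ℕ} (D : BDTriple n) (p q : ℕ × ℕ) : Prop := ∃ k : ℕ, stepIter D (k + 1) p q

/-- a single oriented step: `c = false` if `T` preserves orientation on `p`
(`T` sends the leftmost simple root of `p` to the leftmost one of `q`), `c = true` if
it reverses orientation. -/
def stepO {n : ℕ} (D : BDTriple n) (p q : ℕ × ℕ) (c : Bool) : Prop :=
  step D p q ∧ (if c then D.T p.1 = q.2 - 1 else D.T p.1 = q.1)

/-- `stepIterO D k p q c` : `T^k p = q`, with total orientation reversal given by `c`. -/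
def stepIterO {n : ℕ} (D : BDTriple n) : ℕ → ℕ × ℕ → ℕ × ℕ → Bool → Prop
  | 0, p, q, c => p = q ∧ c = false
  | k + 1, p, q, c => ∃ r b d, stepO D p r b ∧ stepIterO D k r q d ∧ c = xor b d

/-- the triple preserves orientation: `C_{α,β} = 0` for all `α ≺ β`. -/
def OrientPres {n : ℕ} (D : BDTriple n) : Prop :=
  ∀ p q : ℕ × ℕ, ∀ k : ℕ, stepIter D (k + 1) p q → stepIterO D (k + 1) p q false

/-- a choice `CC` of the orientation data `C_{α,β}` for all `α ≺ β`. -/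
def CCSpec {n : ℕ} (D : BDTriple n) (CC : ℕ × ℕ → ℕ × ℕ → Bool) : Prop :=
  ∀ p q : ℕ × ℕ, prec D p q → ∃ k : ℕ, 1 ≤ k ∧ stepIterO D k p q (CC p q)

/-- `C_{α,β}·(|α|-1)` as a natural number, given the orientation data `CC`. -/
def Cnum (CC : ℕ × ℕ → ℕ × ℕ → Bool) (p q : ℕ × ℕ) : ℕ :=
  cond (CC p q) (p.2 - p.1 - 1) 0

/-- a permutation of `Fin n` as a map on `ℕ`. -/
def pv {n : ℕ} (σ : Equiv.Perm (Fin n)) (m : ℕ) : ℕ := if h : m < n then (σ ⟨m, h⟩ : ℕ) else m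

/-- `σ` is a cyclic permutation of `{0,…,n-1}` (a single `n`-cycle). -/
def IsCyclic' {n : ℕ} (σ : Equiv.Perm (Fin n)) : Prop := ∀ i j : Fin n, ∃ k : ℕ, (σ ^ k) i = j

/-- `σ = T̃` is compatible with `T`: `T(α_a) = α_b` implies `T̃ a = b` and `T̃ (a+1) = b+1`. -/
def Compat {n : ℕ} (D : BDTriple n) (σ : Equiv.Perm (Fin n)) : Prop :=
  ∀ a ∈ D.G1, pv σ a = D.T a ∧ pv σ (a + 1) = D.T a + 1

/-- `OO i j` is the least `k ≥ 0` with `T̃^k i = j`. -/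
def OSpec {n : ℕ} (σ : Equiv.Perm (Fin n)) (OO : ℕ → ℕ → ℕ) : Prop :=
  ∀ i j : ℕ, i < n → j < n →
    (pv σ)^[OO i j] i = j ∧ ∀ m < OO i j, (pv σ)^[m] i ≠ j

/-- the finset of positive roots. -/
def roots (n : ℕ) : Finset (ℕ × ℕ) :=
  (Finset.range n ×ˢ Finset.range n).filter fun p => p.1 < p.2

open scoped Classical in
/-- the finset of pairs `(α, β)` of positive roots with `α ≺ β`. -/
noncomputable def precPairs {n : ℕ} (D : BDTriple n) : Finset ((ℕ × ℕ) × (ℕ × ℕ)) :=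
  (roots n ×ˢ roots n).filter fun x => prec D x.1 x.2

/-- the standard part `r_st = ½ Σ_i e_ii ⊗ e_ii + Σ_{α>0} e_{-α} ⊗ e_α`. -/
noncomputable def rstMat (n : ℕ) : M2 n :=
  (1 / 2 : ℂ) • ∑ i ∈ Finset.range n, tens (Eu n i i) (Eu n i i)
    + ∑ p ∈ roots n, tens (Eu n p.2 p.1) (Eu n p.1 p.2)

/-- `a = Σ_{α≺β} (-1)^{C_{α,β}(|α|-1)} (e_{-α} ⊗ e_β - e_β ⊗ e_{-α})`. -/
noncomputable def aMat {n : ℕ} (D : BDTriple n) (CC : ℕ × ℕ → ℕ × ℕ → Bool) : M2 n :=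
  ∑ x ∈ precPairs D,
    ((-1 : ℂ) ^ Cnum CC x.1 x.2) •
      (tens (Eu n x.1.2 x.1.1) (Eu n x.2.1 x.2.2) - tens (Eu n x.2.1 x.2.2) (Eu n x.1.2 x.1.1))

/-- the diagonal part `s = Σ_{i,k} s_{ik} e_ii ⊗ e_kk` as an element of `h ⊗ h`. -/
noncomputable def sMat (n : ℕ) (s : ℕ → ℕ → ℂ) : M2 n :=
  ∑ i ∈ Finset.range n, ∑ k ∈ Finset.range n, s i k • tens (Eu n i i) (Eu n k k)

/-- `s ∈ h ∧ h` satisfies the Belavin–Drinfeld equations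
`[(α - Tα) ⊗ 1] s = ½ [(α + Tα) ⊗ 1] P⁰` for all `α ∈ Γ₁`. -/
def Admissible {n : ℕ} (D : BDTriple n) (s : ℕ → ℕ → ℂ) : Prop :=
  (∀ i k : ℕ, s k i = - s i k) ∧
  ∀ a ∈ D.G1, ∀ k < n,
    (s a k - s (a + 1) k) - (s (D.T a) k - s (D.T a + 1) k)
      = (1 / 2 : ℂ) * ((if a = k then 1 else 0) - (if a + 1 = k then 1 else 0)
          + (if D.T a = k then 1 else 0) - (if D.T a + 1 = k then 1 else 0))

/-- the classical `r`-matrix `r_{T,s} = s + a + r_st`. -/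
noncomputable def rTs {n : ℕ} (D : BDTriple n) (CC : ℕ × ℕ → ℕ × ℕ → Bool)
    (s : ℕ → ℕ → ℂ) : M2 n :=
  sMat n s + aMat D CC + rstMat n

open scoped Classical in
/-- the combinatorial constant `PS(α, β)`. -/
noncomputable def PS {n : ℕ} (D : BDTriple n) (p q : ℕ × ℕ) : ℂ :=
  (1 / 2 : ℂ) * ((if p.2 = q.1 then 1 else 0) + (if q.2 = p.1 then 1 else 0))
    + (if ∃ g : ℕ × ℕ, prec D p g ∧ prec D g q ∧ p.2 = g.1 then 1 else 0)
    + (if ∃ g : ℕ × ℕ, prec D p g ∧ prec D g q ∧ g.2 = p.1 then 1 else 0)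

/-- `q^x = e^{ux/2}` where `q = e^{u/2}`. -/
noncomputable def qp (u x : ℂ) : ℂ := Complex.exp (u * x / 2)

/-- `q^M = e^{(u/2)M}` for a diagonal `M ∈ h ⊗ h` with entries `f i k`. -/
noncomputable def qMat (n : ℕ) (u : ℂ) (f : ℕ → ℕ → ℂ) : M2 n :=
  fun p q => if p = q then Complex.exp (u / 2 * f p.1 p.2) else 0

/-- the standard quantum `R`-matrix `R_st`. -/
noncomputable def RstMat (n : ℕ) (u : ℂ) : M2 n :=
  qp u 1 • ∑ i ∈ Finset.range n, tens (Eu n i i) (Eu n i i)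
    + ∑ i ∈ Finset.range n, ∑ j ∈ Finset.range n,
        (if i ≠ j then (1 : ℂ) else 0) • tens (Eu n i i) (Eu n j j)
    + (qp u 1 - qp u (-1)) • ∑ p ∈ roots n, tens (Eu n p.2 p.1) (Eu n p.1 p.2)

/-- the GGS matrix `R_GGS(q)`, `q = e^{u/2}`. -/
noncomputable def RGGS {n : ℕ} (D : BDTriple n) (CC : ℕ × ℕ → ℕ × ℕ → Bool)
    (s : ℕ → ℕ → ℂ) (u : ℂ) : M2 n :=
  qMat n u s *
    (RstMat n u + (qp u 1 - qp u (-1)) •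
      ∑ x ∈ precPairs D,
        ((-1 : ℂ) ^ Cnum CC x.1 x.2) •
          (qp u (-(Cnum CC x.1 x.2 : ℂ) - PS D x.1 x.2) •
              tens (Eu n x.1.2 x.1.1) (Eu n x.2.1 x.2.2)
            - qp u ((Cnum CC x.1 x.2 : ℂ) + PS D x.1 x.2) •
              tens (Eu n x.2.1 x.2.2) (Eu n x.1.2 x.1.1))) *
  qMat n u s

/-- the coefficients of `(pr ⊗ pr) s` for `s ∈ h ⊗ h`. -/
noncomputable def s0fun (n : ℕ) (s : ℕ → ℕ → ℂ) (i k : ℕ) : ℂ :=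
  s i k - (1 / (n : ℂ)) * (∑ m ∈ Finset.range n, s m k)
    - (1 / (n : ℂ)) * (∑ m ∈ Finset.range n, s i m)
    + (1 / (n : ℂ)) ^ 2 * ∑ m ∈ Finset.range n, ∑ l ∈ Finset.range n, s m l

/-- `r(u,v)` has a Laurent expansion of the first kind at `u = 0`:
`r(u,v) = (1⊗1)/u + Σ_{k≥0} u^k r_k(v)` for `0 < |u| < ε`, with all coefficients
meromorphic in `v` (the expansion being required wherever defined, i.e. away from a
countable singular set `Z` in `v`). -/
def Laurent1 {n : ℕ} (r : ℂ → ℂ → M2 n) (rk : ℕ → ℂ → M2 n) (ε : ℝ) (Z : Set ℂ) : Prop :=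
  0 < ε ∧ Z.Countable ∧
  (∀ (k : ℕ) (p q : Fin n × Fin n), MeromorphicOn (fun v => rk k v p q) Set.univ) ∧
  ∀ v ∉ Z, ∀ u : ℂ, u ≠ 0 → ‖u‖ < ε →
    ∀ p q : Fin n × Fin n,
      HasSum (fun k : ℕ => u ^ k * rk k v p q) (r u v p q - u⁻¹ * (1 : M2 n) p q)

/-- the AYBE, required at all points at which all terms are defined
(for trigonometric solutions: away from the standard singular set). -/
def AYBEg {n : ℕ} (r : ℂ → ℂ → M2 n) : Prop :=
  ∀ u u' v v' : ℂ,
    Complex.exp u ≠ 1 → Complex.exp u' ≠ 1 → Complex.exp (u + u') ≠ 1 →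
    Complex.exp v ≠ 1 → Complex.exp v' ≠ 1 → Complex.exp (v + v') ≠ 1 →
    aybeLHS r u u' v v' = 0

/-- the unitarity condition, away from the standard singular set. -/
def Unitaryg {n : ℕ} (r : ℂ → ℂ → M2 n) : Prop :=
  ∀ u v : ℂ, Complex.exp u ≠ 1 → Complex.exp v ≠ 1 → flipT (r (-u) (-v)) = - r u v

/-- `pr` applied to the first tensor factor of an element of `A ⊗ A ⊗ A`. -/
noncomputable def pr1 {n : ℕ} (x : M3 n) : M3 n := fun p q =>
  x p q - (1 / (n : ℂ)) * (if p.1 = q.1 then 1 else 0) * ∑ m : Fin n, x (m, p.2) (m, q.2)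

/-- `pr` applied to the second tensor factor. -/
noncomputable def pr2 {n : ℕ} (x : M3 n) : M3 n := fun p q =>
  x p q - (1 / (n : ℂ)) * (if p.2.1 = q.2.1 then 1 else 0)
    * ∑ m : Fin n, x (p.1, m, p.2.2) (q.1, m, q.2.2)

/-- `pr` applied to the third tensor factor. -/
noncomputable def pr3 {n : ℕ} (x : M3 n) : M3 n := fun p q =>
  x p q - (1 / (n : ℂ)) * (if p.2.2 = q.2.2 then 1 else 0)
    * ∑ m : Fin n, x (p.1, p.2.1, m) (q.1, q.2.1, m)

/-- `pr ⊗ pr ⊗ pr` on `A ⊗ A ⊗ A`. -/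
noncomputable def prpr3 {n : ℕ} (x : M3 n) : M3 n := pr1 (pr2 (pr3 x))



open Complex Filter Topology

lemma cauchyHasSum {a b : ℕ → ℂ} {u A B : ℂ}
    (ha : HasSum (fun k => u ^ k * a k) A) (hb : HasSum (fun k => u ^ k * b k) B) :
    HasSum (fun k => u ^ k * ∑ j ∈ Finset.range (k + 1), a j * b (k - j)) (A * B) := by
  have hfa : Summable fun k => ‖u ^ k * a k‖ := summable_norm_iff.mpr ha.summable
  have hfb : Summable fun k => ‖u ^ k * b k‖ := summable_norm_iff.mpr hb.summable
  have h := hasSum_sum_range_mul_of_summable_norm hfa hfb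
  rw [ha.tsum_eq, hb.tsum_eq] at h
  convert h using 2 with k
  · rfl
  rw [Finset.mul_sum]
  apply Finset.sum_congr rfl
  intro j hj
  have hj' : j ≤ k := Nat.lt_succ_iff.mp (Finset.mem_range.mp hj)
  rw [show u ^ k = u ^ j * u ^ (k - j) by rw [← pow_add, Nat.add_sub_cancel' hj']]
  ring

lemma head_zero (d : ℕ → ℂ) (δ : ℝ) (hδ : 0 < δ)
    (h : ∀ u : ℂ, u ≠ 0 → ‖u‖ < δ → HasSum (fun k => u ^ k * d k) 0) :
    d 0 = 0 := by
  have hu0 : ((δ/2 : ℝ) : ℂ) ≠ 0 := by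
    simp only [ne_eq, Complex.ofReal_eq_zero]; positivity
  have hu0' : ‖((δ/2 : ℝ) : ℂ)‖ < δ := by
    rw [Complex.norm_real, Real.norm_eq_abs, abs_of_pos (by positivity)]; linarith
  have hs := (h _ hu0 hu0').summable
  have ht : Tendsto (fun k => ‖((δ/2:ℝ):ℂ) ^ k * d k‖) atTop (𝓝 0) := by
    simpa using (hs.tendsto_atTop_zero).norm
  obtain ⟨C, hC⟩ := ht.bddAbove_range
  have hCb : ∀ k, ‖d k‖ * (δ/2) ^ k ≤ C := by
    intro k
    have h2 := hC (Set.mem_range_self k)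
    have : ‖((δ/2:ℝ):ℂ) ^ k * d k‖ = ‖d k‖ * (δ/2) ^ k := by
      rw [norm_mul, norm_pow, Complex.norm_real, Real.norm_eq_abs,
        abs_of_pos (show (0:ℝ) < δ/2 by positivity), mul_comm]
    rwa [this] at h2
  have hC0 : 0 ≤ C := le_trans (by positivity) (hCb 0)
  have key : ∀ t : ℝ, 0 < t → t ≤ δ/4 → ‖d 0‖ ≤ 4*C/δ * t := by
    intro t ht0 ht4
    have htne : ((t:ℝ):ℂ) ≠ 0 := by simp [ne_of_gt ht0]
    have htab : ‖((t:ℝ):ℂ)‖ < δ := by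
      rw [Complex.norm_real, Real.norm_eq_abs, abs_of_pos ht0]; linarith
    have hsum := h _ htne htab
    have hshift : HasSum (fun m => ((t:ℝ):ℂ) ^ (m+1) * d (m+1)) (-(d 0)) := by
      have := (hasSum_nat_add_iff' (f := fun k => ((t:ℝ):ℂ) ^ k * d k) 1).mpr hsum
      simpa using this
    have hratio : 0 < 2*t/δ := by positivity
    have hratio2 : 2*t/δ ≤ 1/2 := by
      rw [div_le_iff₀ hδ]; linarith
    have hbound : ∀ m : ℕ, ‖((t:ℝ):ℂ) ^ (m+1) * d (m+1)‖ ≤ (C * (2*t/δ)) * (1/2)^m := by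
      intro m
      have hp : (0:ℝ) < (δ/2) ^ (m+1) := by positivity
      have h1 : ‖d (m+1)‖ ≤ C * (2/δ)^(m+1) := by
        have he : (2/δ:ℝ)^(m+1) = ((δ/2)^(m+1))⁻¹ := by rw [← inv_pow, inv_div]
        rw [he, ← div_eq_mul_inv, le_div_iff₀ hp]
        exact hCb (m+1)
      have h2 : ‖((t:ℝ):ℂ) ^ (m+1) * d (m+1)‖ = t^(m+1) * ‖d (m+1)‖ := by
        rw [norm_mul, norm_pow, Complex.norm_real, Real.norm_eq_abs, abs_of_pos ht0]
      rw [h2]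
      have h3 : t^(m+1) * ‖d (m+1)‖ ≤ C * (2*t/δ)^(m+1) := by
        calc t^(m+1) * ‖d (m+1)‖ ≤ t^(m+1) * (C * (2/δ)^(m+1)) :=
              mul_le_mul_of_nonneg_left h1 (by positivity)
          _ = C * (2*t/δ)^(m+1) := by
              rw [show (2*t/δ:ℝ) = t*(2/δ) by ring, mul_pow]; ring
      refine h3.trans ?_
      have h4 : (2*t/δ:ℝ)^(m+1) ≤ (2*t/δ) * (1/2)^m := by
        rw [pow_succ']
        exact mul_le_mul_of_nonneg_left
          (pow_le_pow_left₀ (le_of_lt hratio) hratio2 m) (le_of_lt hratio)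
      calc C * (2*t/δ)^(m+1) ≤ C * ((2*t/δ) * (1/2)^m) :=
            mul_le_mul_of_nonneg_left h4 hC0
        _ = (C * (2*t/δ)) * (1/2)^m := by ring
    have hgsum : Summable (fun m : ℕ => (C * (2*t/δ)) * (1/2:ℝ)^m) :=
      (summable_geometric_two).mul_left _
    have hnorm_sum : Summable fun m => ‖((t:ℝ):ℂ) ^ (m+1) * d (m+1)‖ :=
      Summable.of_nonneg_of_le (fun m => norm_nonneg _) hbound hgsum
    have h5 : ‖d 0‖ = ‖∑' m, ((t:ℝ):ℂ) ^ (m+1) * d (m+1)‖ := by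
      rw [hshift.tsum_eq, norm_neg]
    rw [h5]
    calc ‖∑' m, ((t:ℝ):ℂ) ^ (m+1) * d (m+1)‖ ≤ ∑' m, ‖((t:ℝ):ℂ) ^ (m+1) * d (m+1)‖ :=
          norm_tsum_le_tsum_norm hnorm_sum
      _ ≤ ∑' m : ℕ, (C * (2*t/δ)) * (1/2:ℝ)^m := Summable.tsum_le_tsum hbound hnorm_sum hgsum
      _ = (C * (2*t/δ)) * 2 := by rw [tsum_mul_left, tsum_geometric_two]
      _ = 4*C/δ * t := by field_simp; ring
  by_contra hd0
  have hpos : 0 < ‖d 0‖ := norm_pos_iff.mpr hd0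
  set K := 4*C/δ with hK
  have hK0 : 0 ≤ K := by positivity
  set t := min (δ/4) (‖d 0‖/(2*K+1)) with htdef
  have ht0 : 0 < t := lt_min (by positivity) (by positivity)
  have := key t ht0 (min_le_left _ _)
  have h6 : K * t ≤ K * (‖d 0‖/(2*K+1)) :=
    mul_le_mul_of_nonneg_left (min_le_right _ _) hK0
  have h7 : K * (‖d 0‖/(2*K+1)) ≤ ‖d 0‖/2 := by
    rw [mul_div_assoc', div_le_div_iff₀ (by positivity) (by norm_num : (0:ℝ) < 2)]
    nlinarith
  linarith

lemma coeffs_zero (δ : ℝ) (hδ : 0 < δ) :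
    ∀ (d : ℕ → ℂ), (∀ u : ℂ, u ≠ 0 → ‖u‖ < δ → HasSum (fun k => u ^ k * d k) 0) →
    ∀ k, d k = 0 := by
  have main : ∀ k : ℕ, ∀ (d : ℕ → ℂ),
      (∀ u : ℂ, u ≠ 0 → ‖u‖ < δ → HasSum (fun k => u ^ k * d k) 0) → d k = 0 := by
    intro k
    induction k with
    | zero => exact fun d hd => head_zero d δ hδ hd
    | succ k ih =>
      intro d hd
      have h0 : d 0 = 0 := head_zero d δ hδ hd
      have : ∀ u : ℂ, u ≠ 0 → ‖u‖ < δ →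
          HasSum (fun k => u ^ k * d (k+1)) 0 := by
        intro u hu hau
        have h1 := hd u hu hau
        have h2 : HasSum (fun m => u ^ (m+1) * d (m+1)) 0 := by
          have := (hasSum_nat_add_iff' (f := fun k => u ^ k * d k) 1).mpr h1
          simpa [h0] using this
        have h3 := h2.mul_left u⁻¹
        rw [mul_zero] at h3
        convert h3 using 2 with m
        · rfl
        rw [pow_succ]
        field_simp
      exact ih (fun j => d (j+1)) this
  exact fun d hd k => main k d hd

open Filter Topology

section MatrixLayer

variable {n : ℕ}

/-- coefficient sequence: `c 0 = 1`, `c (k+1) = rk k v`. -/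
def cser (rk : ℕ → ℂ → M2 n) (v : ℂ) : ℕ → M2 n
  | 0 => 1
  | k + 1 => rk k v

lemma hasSum_factor {r : ℂ → ℂ → M2 n} {rk : ℕ → ℂ → M2 n} {ε : ℝ} {Z : Set ℂ}
    (hL : Laurent1 r rk ε Z) {v : ℂ} (hv : v ∉ Z) {w : ℂ} (hw : w ≠ 0)
    (hwa : ‖w‖ < ε) (a b : Fin n × Fin n) :
    HasSum (fun k => w ^ k * cser rk v k a b) ((w • r w v) a b) := by
  have h := hL.2.2.2 v hv w hw hwa a b
  have h2 := h.mul_left w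
  have h3 : HasSum (fun k => w ^ (k + 1) * rk k v a b)
      ((w • r w v) a b - (1 : M2 n) a b) := by
    convert h2 using 1
    · rfl
    · funext k; rw [pow_succ]; ring
    · rw [Matrix.smul_apply, smul_eq_mul, mul_sub, ← mul_assoc, mul_inv_cancel₀ hw, one_mul]
  refine (hasSum_nat_add_iff' (f := fun k => w ^ k * cser rk v k a b)
    (g := (w • r w v) a b) 1).mp ?_
  simpa [cser] using h3

lemma emb12_smul {c : ℂ} {x : M2 n} : emb12 (c • x) = c • emb12 x := by
  funext p q; simp [emb12, Matrix.smul_apply, smul_eq_mul, mul_assoc]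

lemma emb13_smul {c : ℂ} {x : M2 n} : emb13 (c • x) = c • emb13 x := by
  funext p q; simp [emb13, Matrix.smul_apply, smul_eq_mul, mul_assoc]

lemma emb23_smul {c : ℂ} {x : M2 n} : emb23 (c • x) = c • emb23 x := by
  funext p q; simp [emb23, Matrix.smul_apply, smul_eq_mul, mul_assoc]

lemma emb12_neg {x : M2 n} : emb12 (-x) = -emb12 x := by
  funext p q; simp [emb12, neg_mul]; split <;> simp

lemma emb13_neg {x : M2 n} : emb13 (-x) = -emb13 x := by
  funext p q; simp [emb13, neg_mul]; split <;> simp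

lemma emb23_neg {x : M2 n} : emb23 (-x) = -emb23 x := by
  funext p q; simp [emb23, neg_mul]; split <;> simp

lemma emb12_one : emb12 (1 : M2 n) = (1 : M3 n) := by
  funext p q
  simp only [emb12, Matrix.one_apply, Prod.ext_iff]
  rcases p with ⟨p1, p2, p3⟩; rcases q with ⟨q1, q2, q3⟩
  by_cases h1 : p1 = q1 <;> by_cases h2 : p2 = q2 <;> by_cases h3 : p3 = q3 <;>
    simp [h1, h2, h3, Prod.ext_iff]

lemma emb13_one : emb13 (1 : M2 n) = (1 : M3 n) := by
  funext p q
  simp only [emb13, Matrix.one_apply, Prod.ext_iff]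
  rcases p with ⟨p1, p2, p3⟩; rcases q with ⟨q1, q2, q3⟩
  by_cases h1 : p1 = q1 <;> by_cases h2 : p2 = q2 <;> by_cases h3 : p3 = q3 <;>
    simp [h1, h2, h3, Prod.ext_iff]

lemma emb23_one : emb23 (1 : M2 n) = (1 : M3 n) := by
  funext p q
  simp only [emb23, Matrix.one_apply, Prod.ext_iff]
  rcases p with ⟨p1, p2, p3⟩; rcases q with ⟨q1, q2, q3⟩
  by_cases h1 : p1 = q1 <;> by_cases h2 : p2 = q2 <;> by_cases h3 : p3 = q3 <;>
    simp [h1, h2, h3, Prod.ext_iff]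

lemma hasSum_emb12 {c : ℕ → M2 n} {X : M2 n} {u : ℂ}
    (h : ∀ a b, HasSum (fun k => u ^ k * c k a b) (X a b)) :
    ∀ p q, HasSum (fun k => u ^ k * emb12 (c k) p q) (emb12 X p q) := by
  intro p q
  have := (h (p.1, p.2.1) (q.1, q.2.1)).mul_right (if p.2.2 = q.2.2 then (1:ℂ) else 0)
  simpa [emb12, mul_assoc] using this

lemma hasSum_emb13 {c : ℕ → M2 n} {X : M2 n} {u : ℂ}
    (h : ∀ a b, HasSum (fun k => u ^ k * c k a b) (X a b)) :
    ∀ p q, HasSum (fun k => u ^ k * emb13 (c k) p q) (emb13 X p q) := by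
  intro p q
  have := (h (p.1, p.2.2) (q.1, q.2.2)).mul_right (if p.2.1 = q.2.1 then (1:ℂ) else 0)
  simpa [emb13, mul_assoc] using this

lemma hasSum_emb23 {c : ℕ → M2 n} {X : M2 n} {u : ℂ}
    (h : ∀ a b, HasSum (fun k => u ^ k * c k a b) (X a b)) :
    ∀ p q, HasSum (fun k => u ^ k * emb23 (c k) p q) (emb23 X p q) := by
  intro p q
  have := (h (p.2.1, p.2.2) (q.2.1, q.2.2)).mul_right (if p.1 = q.1 then (1:ℂ) else 0)
  simpa [emb23, mul_assoc] using this

set_option maxHeartbeats 1000000 in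
lemma hasSum_matmul {A B : M3 n} {a b : ℕ → M3 n} {u : ℂ}
    (ha : ∀ p q, HasSum (fun k => u ^ k * a k p q) (A p q))
    (hb : ∀ p q, HasSum (fun k => u ^ k * b k p q) (B p q)) :
    ∀ p q, HasSum
      (fun k => u ^ k * (∑ j ∈ Finset.range (k + 1), a j * b (k - j)) p q) ((A * B) p q) := by
  intro p q
  rw [Matrix.mul_apply]
  have key : ∀ m : Fin n × Fin n × Fin n, m ∈ (Finset.univ : Finset _) →
      HasSum (fun k => u ^ k * ∑ j ∈ Finset.range (k + 1), a j p m * b (k - j) m q)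
        (A p m * B m q) := fun m _ =>
        cauchyHasSum (a := fun j => a j p m) (b := fun j => b j m q) (ha p m) (hb m q)
  have h2 := hasSum_sum key
  have h3 : (fun k => u ^ k * (∑ j ∈ Finset.range (k + 1), a j * b (k - j)) p q)
      = fun k => ∑ m : Fin n × Fin n × Fin n,
          u ^ k * ∑ j ∈ Finset.range (k + 1), a j p m * b (k - j) m q := by
    funext k
    rw [← Finset.mul_sum]
    congr 1
    simp only [Matrix.sum_apply, Matrix.mul_apply]
    exact Finset.sum_comm
  rw [h3]
  exact h2


lemma exp_ne_one_of_small {u : ℂ} (h0 : u ≠ 0) (h : ‖u‖ < 2) :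
    Complex.exp u ≠ 1 := by
  intro he
  rw [Complex.exp_eq_one_iff] at he
  obtain ⟨m, rfl⟩ := he
  rcases eq_or_ne m 0 with hm | hm
  · simp [hm] at h0
  · have h1 : (1:ℝ) ≤ |(m:ℝ)| := by
      rw [← Int.cast_abs]
      exact_mod_cast Int.one_le_abs hm
    have habs : ‖((m:ℂ) * (2 * Real.pi * Complex.I))‖ = |(m:ℝ)| * (2*Real.pi) := by
      simp [Complex.norm_intCast, abs_of_pos Real.pi_pos]
      try ring
    rw [habs] at h
    nlinarith [Real.pi_gt_three]

@[simp] lemma cser_zero (rk : ℕ → ℂ → M2 n) (v : ℂ) : cser rk v 0 = 1 := rfl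
@[simp] lemma cser_succ (rk : ℕ → ℂ → M2 n) (v : ℂ) (k : ℕ) : cser rk v (k+1) = rk k v := rfl
@[simp] lemma cser_one (rk : ℕ → ℂ → M2 n) (v : ℂ) : cser rk v 1 = rk 0 v := rfl
@[simp] lemma cser_two (rk : ℕ → ℂ → M2 n) (v : ℂ) : cser rk v 2 = rk 1 v := rfl

set_option maxHeartbeats 1000000 in
lemma key_identity {n : ℕ} (r : ℂ → ℂ → M2 n) (hAYBE : AYBEg r)
    (rk : ℕ → ℂ → M2 n) (ε : ℝ) (Z : Set ℂ) (hL : Laurent1 r rk ε Z)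
    (v : ℂ) (hv : v ∉ Z) (hvv : v + v ∉ Z)
    (he : Complex.exp v ≠ 1) (he2 : Complex.exp (v + v) ≠ 1) :
    emb12 (rk 0 v) * emb13 (rk 0 (v + v)) - emb23 (rk 0 v) * emb12 (rk 0 v)
      + emb13 (rk 0 (v + v)) * emb23 (rk 0 v)
    = emb12 (rk 1 v) + emb13 (rk 1 (v + v)) + emb23 (rk 1 v) := by
  have hε : 0 < ε := hL.1
  set δ : ℝ := min (ε/2) 1 with hδdef
  have hδ : 0 < δ := lt_min (by positivity) one_pos
  -- the coefficient sequence
  set D : ℕ → M3 n := fun k =>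
      (-(1/2) : ℂ) • (∑ j ∈ Finset.range (k+1),
          emb12 (((-1:ℂ)^j) • cser rk v j) * emb13 (((2:ℂ)^(k-j)) • cser rk (v+v) (k-j)))
      + (-(1/2) : ℂ) • (∑ j ∈ Finset.range (k+1),
          emb23 (((2:ℂ)^j) • cser rk v j) * emb12 (cser rk v (k-j)))
      + ∑ j ∈ Finset.range (k+1),
          emb13 (cser rk (v+v) j) * emb23 (cser rk v (k-j)) with hDdef
  have hD : ∀ u : ℂ, u ≠ 0 → ‖u‖ < δ →
      ∀ p q, HasSum (fun k => u ^ k * D k p q) 0 := by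
    intro u hu hua p q
    have hu1 : ‖u‖ < 1 := lt_of_lt_of_le hua (min_le_right _ _)
    have huε : ‖u‖ < ε := lt_of_lt_of_le hua
      (le_trans (min_le_left _ _) (by linarith))
    have hu2ε : ‖2*u‖ < ε := by
      rw [norm_mul, Complex.norm_two]
      have := lt_of_lt_of_le hua (min_le_left _ _)
      linarith
    have hun : -u ≠ 0 := neg_ne_zero.mpr hu
    have hu2 : (2:ℂ)*u ≠ 0 := mul_ne_zero two_ne_zero hu
    have hunε : ‖-u‖ < ε := by rwa [norm_neg]
    -- the five factor series
    have f1 : ∀ a b, HasSum (fun k => u ^ k * (((-1:ℂ)^k) • cser rk v k) a b)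
        (((-u) • r (-u) v) a b) := by
      intro a b
      have h := hasSum_factor hL hv hun hunε a b
      have heq : (fun k => u ^ k * (((-1:ℂ)^k) • cser rk v k) a b)
          = fun k => (-u) ^ k * cser rk v k a b := by
        funext k
        rw [Matrix.smul_apply, smul_eq_mul, neg_pow]
        ring
      rw [heq]; exact h
    have f2 : ∀ a b, HasSum (fun k => u ^ k * (((2:ℂ)^k) • cser rk (v+v) k) a b)
        (((2*u) • r (2*u) (v+v)) a b) := by
      intro a b
      have h := hasSum_factor hL hvv hu2 hu2ε a b
      have heq : (fun k => u ^ k * (((2:ℂ)^k) • cser rk (v+v) k) a b)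
          = fun k => (2*u) ^ k * cser rk (v+v) k a b := by
        funext k
        rw [Matrix.smul_apply, smul_eq_mul, mul_pow]
        ring
      rw [heq]; exact h
    have f3 : ∀ a b, HasSum (fun k => u ^ k * (((2:ℂ)^k) • cser rk v k) a b)
        (((2*u) • r (2*u) v) a b) := by
      intro a b
      have h := hasSum_factor hL hv hu2 hu2ε a b
      have heq : (fun k => u ^ k * (((2:ℂ)^k) • cser rk v k) a b)
          = fun k => (2*u) ^ k * cser rk v k a b := by
        funext k
        rw [Matrix.smul_apply, smul_eq_mul, mul_pow]
        ring
      rw [heq]; exact h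
    have f4 : ∀ a b, HasSum (fun k => u ^ k * cser rk v k a b)
        ((u • r u v) a b) := fun a b => hasSum_factor hL hv hu huε a b
    have f5 : ∀ a b, HasSum (fun k => u ^ k * cser rk (v+v) k a b)
        ((u • r u (v+v)) a b) := fun a b => hasSum_factor hL hvv hu huε a b
    -- products
    have P1 := hasSum_matmul (a := fun j => emb12 (((-1:ℂ)^j) • cser rk v j))
      (b := fun j => emb13 (((2:ℂ)^j) • cser rk (v+v) j))
      (hasSum_emb12 f1) (hasSum_emb13 f2) p q
    have P2 := hasSum_matmul (a := fun j => emb23 (((2:ℂ)^j) • cser rk v j))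
      (b := fun j => emb12 (cser rk v j))
      (hasSum_emb23 f3) (hasSum_emb12 f4) p q
    have P3 := hasSum_matmul (a := fun j => emb13 (cser rk (v+v) j))
      (b := fun j => emb23 (cser rk v j))
      (hasSum_emb13 f5) (hasSum_emb23 f4) p q
    have hcomb := ((P1.mul_left (-(1/2) : ℂ)).add (P2.mul_left (-(1/2) : ℂ))).add P3
    -- identify the sum with u^2 • aybeLHS = 0
    have hS : (-(1/2) : ℂ) * ((emb12 ((-u) • r (-u) v) * emb13 ((2*u) • r (2*u) (v+v))) p q)
        + (-(1/2) : ℂ) * ((emb23 ((2*u) • r (2*u) v) * emb12 (u • r u v)) p q)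
        + (emb13 (u • r u (v+v)) * emb23 (u • r u v)) p q = 0 := by
      have haybe : aybeLHS r u u v v = 0 := by
        apply hAYBE u u v v
        · exact exp_ne_one_of_small hu (by linarith)
        · exact exp_ne_one_of_small hu (by linarith)
        · apply exp_ne_one_of_small (by
            intro h; apply hu; have : (2:ℂ) * u = 0 := by rw [two_mul]; exact h
            exact (mul_ne_zero two_ne_zero hu) this |>.elim)
          rw [show u + u = 2*u by ring, norm_mul, Complex.norm_two]; linarith
        · exact he
        · exact he
        · exact he2
      have hmat : (-(1/2) : ℂ) • (emb12 ((-u) • r (-u) v) * emb13 ((2*u) • r (2*u) (v+v)))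
          + (-(1/2) : ℂ) • (emb23 ((2*u) • r (2*u) v) * emb12 (u • r u v))
          + emb13 (u • r u (v+v)) * emb23 (u • r u v)
          = (u^2) • aybeLHS r u u v v := by
        rw [aybeLHS]
        rw [show (2:ℂ)*u = u + u by ring]
        simp only [emb12_smul, emb13_smul, emb23_smul, Matrix.smul_mul, Matrix.mul_smul,
          smul_smul, smul_sub, smul_add]
        module
      have := congrFun (congrFun (hmat.trans (by rw [haybe, smul_zero])) p) q
      simpa [Matrix.add_apply, Matrix.smul_apply, smul_eq_mul] using this
    rw [hS] at hcomb
    have heq : (fun k => u ^ k * D k p q)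
        = fun k => -(1/2) * (u ^ k * (∑ j ∈ Finset.range (k+1),
              emb12 (((-1:ℂ)^j) • cser rk v j)
                * emb13 (((2:ℂ)^(k-j)) • cser rk (v+v) (k-j))) p q)
          + -(1/2) * (u ^ k * (∑ j ∈ Finset.range (k+1),
              emb23 (((2:ℂ)^j) • cser rk v j) * emb12 (cser rk v (k-j))) p q)
          + u ^ k * (∑ j ∈ Finset.range (k+1),
              emb13 (cser rk (v+v) j) * emb23 (cser rk v (k-j))) p q := by
      funext k
      simp only [hDdef, Matrix.add_apply, Matrix.smul_apply, smul_eq_mul]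
      ring
    rw [heq]
    exact hcomb
  -- extract the second coefficient
  have hD2 : D 2 = 0 := by
    funext p q
    have := coeffs_zero δ hδ (fun k => D k p q) (fun u hu hua => hD u hu hua p q) 2
    simpa using this
  -- compute D 2
  have hD2' : D 2 =
      (emb12 (rk 0 v) * emb13 (rk 0 (v + v)) - emb23 (rk 0 v) * emb12 (rk 0 v)
        + emb13 (rk 0 (v + v)) * emb23 (rk 0 v))
      - emb12 (rk 1 v) - emb13 (rk 1 (v + v)) - emb23 (rk 1 v) := by
    show (-(1/2) : ℂ) • (∑ j ∈ Finset.range 3,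
          emb12 (((-1:ℂ)^j) • cser rk v j) * emb13 (((2:ℂ)^(2-j)) • cser rk (v+v) (2-j)))
      + (-(1/2) : ℂ) • (∑ j ∈ Finset.range 3,
          emb23 (((2:ℂ)^j) • cser rk v j) * emb12 (cser rk v (2-j)))
      + ∑ j ∈ Finset.range 3,
          emb13 (cser rk (v+v) j) * emb23 (cser rk v (2-j)) = _
    rw [Finset.sum_range_succ, Finset.sum_range_succ, Finset.sum_range_one,
        Finset.sum_range_succ, Finset.sum_range_succ, Finset.sum_range_one,
        Finset.sum_range_succ, Finset.sum_range_succ, Finset.sum_range_one]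
    norm_num [emb12_smul, emb13_smul, emb23_smul, emb12_one, emb13_one, emb23_one,
      emb12_neg, emb13_neg, emb23_neg, Matrix.smul_mul, Matrix.mul_smul, smul_smul]
    module
  rw [hD2'] at hD2
  rw [← sub_eq_zero, ← hD2]
  abel

end MatrixLayer

section Projections
open Filter Topology
variable {n : ℕ}

lemma pr1_zero : pr1 (0 : M3 n) = 0 := by funext p q; simp [pr1]
lemma pr2_zero : pr2 (0 : M3 n) = 0 := by funext p q; simp [pr2]
lemma pr3_zero : pr3 (0 : M3 n) = 0 := by funext p q; simp [pr3]

lemma prpr3_zero : prpr3 (0 : M3 n) = 0 := by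
  rw [prpr3, pr3_zero, pr2_zero, pr1_zero]

lemma pr1_add (x y : M3 n) : pr1 (x + y) = pr1 x + pr1 y := by
  funext p q; simp [pr1, Matrix.add_apply, Finset.sum_add_distrib]; split_ifs <;> ring

lemma pr2_add (x y : M3 n) : pr2 (x + y) = pr2 x + pr2 y := by
  funext p q; simp [pr2, Matrix.add_apply, Finset.sum_add_distrib]; split_ifs <;> ring

lemma pr3_add (x y : M3 n) : pr3 (x + y) = pr3 x + pr3 y := by
  funext p q; simp [pr3, Matrix.add_apply, Finset.sum_add_distrib]; split_ifs <;> ring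

lemma prpr3_add (x y : M3 n) : prpr3 (x + y) = prpr3 x + prpr3 y := by
  rw [prpr3, pr3_add, pr2_add, pr1_add]; rfl

lemma pr3_emb12 (hn : (n:ℂ) ≠ 0) (x : M2 n) : pr3 (emb12 x) = 0 := by
  funext p q
  simp only [pr3, emb12, Matrix.zero_apply]
  simp only [if_pos rfl, mul_one, Finset.sum_const, Finset.card_univ, Fintype.card_fin,
    nsmul_eq_mul]
  split_ifs with h
  · field_simp; ring
  · simp

lemma prpr3_emb12 (hn : (n:ℂ) ≠ 0) (x : M2 n) : prpr3 (emb12 x) = 0 := by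
  rw [prpr3, pr3_emb12 hn, pr2_zero, pr1_zero]

lemma pr2_pr3_emb13 (hn : (n:ℂ) ≠ 0) (x : M2 n) : pr2 (pr3 (emb13 x)) = 0 := by
  funext p q
  simp only [pr2, pr3, emb13, Matrix.zero_apply]
  simp only [if_pos rfl, mul_one, Finset.sum_const, Finset.card_univ, Fintype.card_fin,
    nsmul_eq_mul, Finset.sum_sub_distrib, Finset.mul_sum]
  split_ifs with h1 h2 h2 <;> simp only [← Finset.mul_sum, ← Finset.sum_mul, Finset.sum_const, Finset.card_univ, Fintype.card_fin, nsmul_eq_mul, mul_one] <;> field_simp <;> ring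

lemma prpr3_emb13 (hn : (n:ℂ) ≠ 0) (x : M2 n) : prpr3 (emb13 x) = 0 := by
  rw [prpr3, pr2_pr3_emb13 hn, pr1_zero]

lemma prpr3_emb23 (hn : (n:ℂ) ≠ 0) (x : M2 n) : prpr3 (emb23 x) = 0 := by
  funext p q
  simp only [prpr3, pr1, pr2, pr3, emb23, Matrix.zero_apply]
  simp only [if_pos rfl, mul_one, Finset.sum_const, Finset.card_univ, Fintype.card_fin,
    nsmul_eq_mul, Finset.sum_sub_distrib, Finset.mul_sum]
  split_ifs with h1 h2 h2 <;> simp only [← Finset.mul_sum, ← Finset.sum_mul, Finset.sum_const, Finset.card_univ, Fintype.card_fin, nsmul_eq_mul, mul_one] <;> field_simp <;> ring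

end Projections

section Final
open Filter Topology
variable {n : ℕ}

lemma exp_real_neg_ne_one {t : ℝ} (ht : t < 0) : Complex.exp ((t:ℝ):ℂ) ≠ 1 := by
  intro h
  have h1 : ‖Complex.exp ((t:ℝ):ℂ)‖ = 1 := by rw [h]; simp
  rw [Complex.norm_exp, Complex.ofReal_re] at h1
  rw [Real.exp_eq_one_iff] at h1
  linarith

lemma tendsto_mul_entry {A B : ℕ → M3 n} {A0 B0 : M3 n}
    (hA : ∀ p q, Tendsto (fun k => A k p q) atTop (𝓝 (A0 p q)))
    (hB : ∀ p q, Tendsto (fun k => B k p q) atTop (𝓝 (B0 p q))) :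
    ∀ p q, Tendsto (fun k => (A k * B k) p q) atTop (𝓝 ((A0 * B0) p q)) := by
  intro p q
  simp only [Matrix.mul_apply]
  exact tendsto_finset_sum _ fun m _ => (hA p m).mul (hB m q)

lemma tendsto_pr3_entry {X : ℕ → M3 n} {X0 : M3 n}
    (h : ∀ p q, Tendsto (fun k => X k p q) atTop (𝓝 (X0 p q))) :
    ∀ p q, Tendsto (fun k => pr3 (X k) p q) atTop (𝓝 (pr3 X0 p q)) := by
  intro p q
  exact (h p q).sub ((tendsto_finset_sum _ fun m _ => h _ _).const_mul _)

lemma tendsto_pr2_entry {X : ℕ → M3 n} {X0 : M3 n}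
    (h : ∀ p q, Tendsto (fun k => X k p q) atTop (𝓝 (X0 p q))) :
    ∀ p q, Tendsto (fun k => pr2 (X k) p q) atTop (𝓝 (pr2 X0 p q)) := by
  intro p q
  exact (h p q).sub ((tendsto_finset_sum _ fun m _ => h _ _).const_mul _)

lemma tendsto_pr1_entry {X : ℕ → M3 n} {X0 : M3 n}
    (h : ∀ p q, Tendsto (fun k => X k p q) atTop (𝓝 (X0 p q))) :
    ∀ p q, Tendsto (fun k => pr1 (X k) p q) atTop (𝓝 (pr1 X0 p q)) := by
  intro p q
  exact (h p q).sub ((tendsto_finset_sum _ fun m _ => h _ _).const_mul _)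

lemma tendsto_prpr3_entry {X : ℕ → M3 n} {X0 : M3 n}
    (h : ∀ p q, Tendsto (fun k => X k p q) atTop (𝓝 (X0 p q))) :
    ∀ p q, Tendsto (fun k => prpr3 (X k) p q) atTop (𝓝 (prpr3 X0 p q)) :=
  tendsto_pr1_entry (tendsto_pr2_entry (tendsto_pr3_entry h))

theorem projected_cubic_vanishes' (n : ℕ) (hn : 2 ≤ n)
    (R : M2 n)
    (r : ℂ → ℂ → M2 n) (hAYBE : AYBEg r)
    (rk : ℕ → ℂ → M2 n) (ε : ℝ) (Z : Set ℂ) (hL : Laurent1 r rk ε Z)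
    (h0 : ∀ v : ℂ, Complex.exp v ≠ 1 →
      rk 0 v = (1 - Complex.exp v)⁻¹ • (R + Complex.exp v • flipT R)) :
    prpr3 (emb12 R * emb13 R - emb23 R * emb12 R + emb13 R * emb23 R) = 0 := by
  have hnne : (n:ℂ) ≠ 0 := by
    simp only [ne_eq, Nat.cast_eq_zero]
    omega
  set Rb := flipT R with hRb
  -- the rational family
  set g : ℂ → M2 n := fun x => (1 - x)⁻¹ • (R + x • Rb) with hg
  set g2 : ℂ → M2 n := fun x => (1 - x * x)⁻¹ • (R + (x * x) • Rb) with hg2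
  set F : ℂ → M3 n := fun x =>
    emb12 (g x) * emb13 (g2 x) - emb23 (g x) * emb12 (g x)
      + emb13 (g2 x) * emb23 (g x) with hF
  -- choose good sample points
  have hZc : Z.Countable := hL.2.1
  have hB1 : {t : ℝ | ((t:ℝ):ℂ) ∈ Z}.Countable :=
    hZc.preimage Complex.ofReal_injective
  have hB2 : {t : ℝ | ((2*t:ℝ):ℂ) ∈ Z}.Countable := by
    have hinj : Function.Injective (fun t : ℝ => ((2*t:ℝ):ℂ)) := by
      intro a b hab
      simp only [Complex.ofReal_inj] at hab
      linarith
    exact hZc.preimage hinj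
  have hsel : ∀ k : ℕ, ∃ t : ℝ, t ∈ Set.Ioo (-(k:ℝ)-1) (-(k:ℝ)) ∧
      ((t:ℝ):ℂ) ∉ Z ∧ ((2*t:ℝ):ℂ) ∉ Z := by
    intro k
    by_contra hcon
    push_neg at hcon
    have hsub : Set.Ioo (-(k:ℝ)-1) (-(k:ℝ)) ⊆
        {t : ℝ | ((t:ℝ):ℂ) ∈ Z} ∪ {t : ℝ | ((2*t:ℝ):ℂ) ∈ Z} := by
      intro t ht
      rcases Classical.em (((t:ℝ):ℂ) ∈ Z) with h | h
      · exact Or.inl h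
      · exact Or.inr (hcon t ht h)
    have hcnt : (Set.Ioo (-(k:ℝ)-1) (-(k:ℝ))).Countable :=
      (hB1.union hB2).mono hsub
    have hle := hcnt.le_aleph0
    rw [Cardinal.mk_Ioo_real (by linarith)] at hle
    exact absurd hle (not_le.mpr Cardinal.aleph0_lt_continuum)
  choose t ht1 ht2 ht3 using hsel
  have htneg : ∀ k, t k < 0 := by
    intro k
    have := (ht1 k).2
    have h2 : -(k:ℝ) ≤ 0 := by simp [Nat.cast_nonneg]
    linarith
  -- the identity at the sample points
  have hFzero : ∀ k : ℕ, prpr3 (F (Complex.exp ((t k : ℝ):ℂ))) = 0 := by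
    intro k
    set v : ℂ := ((t k : ℝ):ℂ) with hv
    have hvneg : t k < 0 := htneg k
    have h2vneg : 2 * t k < 0 := by linarith
    have hvv : v + v = ((2 * t k : ℝ):ℂ) := by push_cast; ring
    have hexpv : Complex.exp v ≠ 1 := exp_real_neg_ne_one hvneg
    have hexpvv : Complex.exp (v + v) ≠ 1 := by
      rw [hvv]; exact exp_real_neg_ne_one h2vneg
    have hkey := key_identity r hAYBE rk ε Z hL v (ht2 k) (by rw [hvv]; exact ht3 k)
      hexpv hexpvv
    -- substitute the explicit form of rk 0
    have e1 : rk 0 v = g (Complex.exp v) := by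
      rw [h0 v hexpv]
    have e2 : rk 0 (v + v) = g2 (Complex.exp v) := by
      rw [h0 (v + v) hexpvv, hg2]
      rw [show Complex.exp (v + v) = Complex.exp v * Complex.exp v from Complex.exp_add v v]
    rw [e1, e2] at hkey
    have : prpr3 (F (Complex.exp v)) =
        prpr3 (emb12 (rk 1 v) + emb13 (rk 1 (v + v)) + emb23 (rk 1 v)) := by
      rw [hF]; exact congrArg prpr3 hkey
    rw [this, prpr3_add, prpr3_add, prpr3_emb12 hnne, prpr3_emb13 hnne, prpr3_emb23 hnne]
    simp
  -- the limit
  have hxk : Tendsto (fun k => Complex.exp ((t k : ℝ):ℂ)) atTop (𝓝 0) := by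
    rw [tendsto_zero_iff_norm_tendsto_zero]
    have hb : ∀ k : ℕ, ‖Complex.exp ((t k : ℝ):ℂ)‖ ≤ Real.exp (-(k:ℝ)) := by
      intro k
      rw [Complex.norm_exp, Complex.ofReal_re]
      exact Real.exp_le_exp.mpr (le_of_lt (ht1 k).2)
    have hexp : Tendsto (fun k : ℕ => Real.exp (-(k:ℝ))) atTop (𝓝 0) :=
      Real.tendsto_exp_atBot.comp (tendsto_neg_atBot_iff.mpr tendsto_natCast_atTop_atTop)
    exact squeeze_zero (fun k => norm_nonneg _) hb hexp
  -- entrywise limits of g, g2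
  have hgt : ∀ a b, Tendsto (fun k => g (Complex.exp ((t k : ℝ):ℂ)) a b) atTop (𝓝 (R a b)) := by
    intro a b
    have hform : ∀ x : ℂ, g x a b = (1 - x)⁻¹ * (R a b + x * Rb a b) := by
      intro x; simp [hg, Matrix.smul_apply, Matrix.add_apply, smul_eq_mul]; ring
    simp only [hform]
    have h1 : Tendsto (fun k => (1 - Complex.exp ((t k : ℝ):ℂ))⁻¹) atTop (𝓝 ((1 - 0)⁻¹)) :=
      (tendsto_const_nhds.sub hxk).inv₀ (by norm_num)
    have h2 : Tendsto (fun k => R a b + Complex.exp ((t k : ℝ):ℂ) * Rb a b) atTop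
        (𝓝 (R a b + 0 * Rb a b)) := tendsto_const_nhds.add (hxk.mul tendsto_const_nhds)
    have := h1.mul h2
    simpa using this
  have hg2t : ∀ a b, Tendsto (fun k => g2 (Complex.exp ((t k : ℝ):ℂ)) a b) atTop (𝓝 (R a b)) := by
    intro a b
    have hform : ∀ x : ℂ, g2 x a b = (1 - x * x)⁻¹ * (R a b + (x * x) * Rb a b) := by
      intro x; simp [hg2, Matrix.smul_apply, Matrix.add_apply, smul_eq_mul]; ring
    simp only [hform]
    have h1 : Tendsto (fun k => (1 - Complex.exp ((t k : ℝ):ℂ) * Complex.exp ((t k : ℝ):ℂ))⁻¹)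
        atTop (𝓝 ((1 - 0 * 0)⁻¹)) := (tendsto_const_nhds.sub (hxk.mul hxk)).inv₀ (by norm_num)
    have h2 : Tendsto (fun k => R a b +
        (Complex.exp ((t k : ℝ):ℂ) * Complex.exp ((t k : ℝ):ℂ)) * Rb a b) atTop
        (𝓝 (R a b + (0 * 0) * Rb a b)) :=
      tendsto_const_nhds.add ((hxk.mul hxk).mul tendsto_const_nhds)
    have := h1.mul h2
    simpa using this
  -- entrywise limits of the emb'd matrices
  have hE12 : ∀ p q, Tendsto (fun k => emb12 (g (Complex.exp ((t k : ℝ):ℂ))) p q) atTop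
      (𝓝 (emb12 R p q)) := by
    intro p q
    simp only [emb12]
    exact (hgt _ _).mul_const _
  have hE13 : ∀ p q, Tendsto (fun k => emb13 (g2 (Complex.exp ((t k : ℝ):ℂ))) p q) atTop
      (𝓝 (emb13 R p q)) := by
    intro p q
    simp only [emb13]
    exact (hg2t _ _).mul_const _
  have hE23 : ∀ p q, Tendsto (fun k => emb23 (g (Complex.exp ((t k : ℝ):ℂ))) p q) atTop
      (𝓝 (emb23 R p q)) := by
    intro p q
    simp only [emb23]
    exact (hgt _ _).mul_const _
  have hE12' : ∀ p q, Tendsto (fun k => emb12 (g (Complex.exp ((t k : ℝ):ℂ))) p q) atTop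
      (𝓝 (emb12 R p q)) := hE12
  have hFt : ∀ p q, Tendsto (fun k => F (Complex.exp ((t k : ℝ):ℂ)) p q) atTop
      (𝓝 ((emb12 R * emb13 R - emb23 R * emb12 R + emb13 R * emb23 R) p q)) := by
    intro p q
    have hsub : ∀ p q : Fin n × Fin n × Fin n,
        Tendsto (fun k => (emb12 (g (Complex.exp ((t k : ℝ):ℂ)))
            * emb13 (g2 (Complex.exp ((t k : ℝ):ℂ)))
          - emb23 (g (Complex.exp ((t k : ℝ):ℂ))) * emb12 (g (Complex.exp ((t k : ℝ):ℂ)))) p q)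
          atTop (𝓝 ((emb12 R * emb13 R - emb23 R * emb12 R) p q)) := by
      intro p' q'
      simp only [Matrix.sub_apply]
      exact (tendsto_mul_entry hE12 hE13 p' q').sub (tendsto_mul_entry hE23 hE12 p' q')
    have := (hsub p q).add (tendsto_mul_entry hE13 hE23 p q)
    simp only [hF, Matrix.add_apply, Matrix.sub_apply] at this ⊢
    exact this
  have hPt := tendsto_prpr3_entry hFt
  -- conclusion
  funext p q
  have hconst : Tendsto (fun k => prpr3 (F (Complex.exp ((t k : ℝ):ℂ))) p q) atTop
      (𝓝 (0:ℂ)) := by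
    have : (fun k => prpr3 (F (Complex.exp ((t k : ℝ):ℂ))) p q) = fun _ => (0:ℂ) := by
      funext k; rw [hFzero k]; rfl
    rw [this]
    exact tendsto_const_nhds
  have := tendsto_nhds_unique (hPt p q) hconst
  simpa using this

/-- If an AYBE solution has a Laurent expansion of the first kind whose
zero-order term is the trigonometric classical `r`-matrix `r̂_{T,s}`, then
`(pr⊗pr⊗pr)[r_{T,s}^{12} r_{T,s}^{13} - r_{T,s}^{23} r_{T,s}^{12}
  + r_{T,s}^{13} r_{T,s}^{23}] = 0`. -/
theorem projected_cubic_vanishes (n : ℕ) (hn : 2 ≤ n) (D : BDTriple n)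
    (CC : ℕ × ℕ → ℕ × ℕ → Bool) (hCC : CCSpec D CC)
    (s : ℕ → ℕ → ℂ) (hs : Admissible D s)
    (r : ℂ → ℂ → M2 n) (hAYBE : AYBEg r)
    (rk : ℕ → ℂ → M2 n) (ε : ℝ) (Z : Set ℂ) (hL : Laurent1 r rk ε Z)
    (h0 : ∀ v : ℂ, Complex.exp v ≠ 1 →
      rk 0 v = (1 - Complex.exp v)⁻¹ • (rTs D CC s + Complex.exp v • flipT (rTs D CC s))) :
    prpr3 (emb12 (rTs D CC s) * emb13 (rTs D CC s)
        - emb23 (rTs D CC s) * emb12 (rTs D CC s)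
        + emb13 (rTs D CC s) * emb23 (rTs D CC s)) = 0 :=
  projected_cubic_vanishes' n hn (rTs D CC s) r hAYBE rk ε Z hL h0

end Final
end

section
/- Let (Γ_1,Γ_2,T) be a BD triple for which there exist indices i, j with T(α_i) = α_j and T(α_{i+1}) = α_{j−1} (i.e., T does not preserve orientation), and let r̃ = r_{T,s} for any admissible s. Then the coefficient of e_{i+2,i}⊗e_{j−1,j}⊗e_{j,j+1} in r̃^{12}·r̃^{13} − r̃^{23}·r̃^{12} + r̃^{13}·r̃^{23} equals 1; in particular, (pr⊗pr⊗pr)[ r̃^{12}·r̃^{13} − r̃^{23}·r̃^{12} + r̃^{13}·r̃^{23} ] ≠ 0. -/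
open Complex

/-- the `(x,z,s),(y,w,t)` entry of an element of `A ⊗ A ⊗ A` (i.e. the coefficient of
`e_{xy} ⊗ e_{zw} ⊗ e_{st}`), with ℕ-indices. -/
noncomputable def entry3 {n : ℕ} (X : M3 n) (x z s y w t : ℕ) : ℂ :=
  ∑ p : Fin n × Fin n × Fin n, ∑ q : Fin n × Fin n × Fin n,
    if (p.1 : ℕ) = x ∧ (p.2.1 : ℕ) = z ∧ (p.2.2 : ℕ) = s
        ∧ (q.1 : ℕ) = y ∧ (q.2.1 : ℕ) = w ∧ (q.2.2 : ℕ) = t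
      then X p q else 0

section Comb
variable {n : ℕ}

/-- `Chain D u t v`: `T^[t] u = v` and all iterates before `t` lie in `Γ₁`. -/
def Chain (D : BDTriple n) (u t v : ℕ) : Prop :=
  D.T^[t] u = v ∧ ∀ i < t, D.T^[i] u ∈ D.G1

lemma chain_comp {D : BDTriple n} {u s' v t w : ℕ} (h1 : Chain D u s' v)
    (h2 : Chain D v t w) : Chain D u (s' + t) w := by
  constructor
  · rw [add_comm, Function.iterate_add_apply, h1.1, h2.1]
  · intro i hi
    rcases lt_or_ge i s' with h | h
    · exact h1.2 i h
    · have : D.T^[i] u = D.T^[i - s'] v := by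
        rw [← h1.1, ← Function.iterate_add_apply]
        congr 1
        omega
      rw [this]
      exact h2.2 _ (by omega)

lemma chain_cycle {D : BDTriple n} {u t : ℕ} (h : Chain D u t u) (ht : 1 ≤ t) : False := by
  have key : ∀ k, D.T^[k] u ∈ D.G1 := by
    intro k
    induction k using Nat.strong_induction_on with
    | _ k ih =>
      rcases lt_or_ge k t with h' | h'
      · exact h.2 k h'
      · have hk : D.T^[k] u = D.T^[k - t] u := by
          conv_lhs => rw [show k = (k - t) + t by omega, Function.iterate_add_apply, h.1]
        rw [hk]
        exact ih _ (by omega)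
  obtain ⟨k, hk⟩ := D.Tnil u (by simpa using key 0)
  exact hk (key k)

lemma chain_one {D : BDTriple n} {u v : ℕ} (hu : u ∈ D.G1) (hT : D.T u = v) :
    Chain D u 1 v := by
  refine ⟨by simpa using hT, ?_⟩
  intro i hi
  interval_cases i
  simpa using hu

lemma chain_succ {D : BDTriple n} {u v w k : ℕ} (hu : u ∈ D.G1) (hT : D.T u = v)
    (hc : Chain D v k w) : Chain D u (k + 1) w := by
  have := chain_comp (chain_one hu hT) hc
  rwa [add_comm] at this

lemma Ico_eq_Ico {a b c d : ℕ} (hab : a < b) (h : Finset.Ico a b = Finset.Ico c d) :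
    a = c ∧ b = d := by
  have h1 : a ∈ Finset.Ico c d := h ▸ Finset.mem_Ico.2 ⟨le_refl a, hab⟩
  rw [Finset.mem_Ico] at h1
  have hcd : c < d := by omega
  have h2 : c ∈ Finset.Ico a b := h.symm ▸ Finset.mem_Ico.2 ⟨le_refl c, hcd⟩
  have h3 : b - 1 ∈ Finset.Ico c d := h ▸ Finset.mem_Ico.2 (by omega)
  have h4 : d - 1 ∈ Finset.Ico a b := h.symm ▸ Finset.mem_Ico.2 (by omega)
  rw [Finset.mem_Ico] at h2 h3 h4
  omega

lemma step_len {D : BDTriple n} {p q : ℕ × ℕ} (h : step D p q) :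
    p.1 + q.2 = p.2 + q.1 := by
  obtain ⟨⟨hp1, hp2⟩, ⟨hq1, hq2⟩, hsub, himg⟩ := h
  have hcard : (Finset.Ico p.1 p.2).card = (Finset.Ico q.1 q.2).card := by
    rw [← himg]
    exact (Finset.card_image_of_injOn
      (fun x hx y hy hxy => D.Tinj x (hsub hx) y (hsub hy) hxy)).symm
  simp only [Nat.card_Ico] at hcard
  omega

lemma stepIter_len {D : BDTriple n} :
    ∀ k (p q : ℕ × ℕ), stepIter D k p q → p.1 + q.2 = p.2 + q.1 := by
  intro k
  induction k with
  | zero => intro p q h; cases h; omega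
  | succ k ih =>
    rintro p q ⟨r, hs, hrest⟩
    have h1 := step_len hs
    have h2 := ih r q hrest
    omega

lemma step_det {D : BDTriple n} {p q q' : ℕ × ℕ} (h1 : step D p q) (h2 : step D p q') :
    q = q' := by
  obtain ⟨_, ⟨hq, _⟩, _, himg1⟩ := h1
  obtain ⟨_, ⟨hq', _⟩, _, himg2⟩ := h2
  have := Ico_eq_Ico hq (himg1.symm.trans himg2)
  exact Prod.ext this.1 this.2

lemma L1 {D : BDTriple n} :
    ∀ k (x y : ℕ), stepIter D k (x, x + 1) (y, y + 1) → Chain D x k y := by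
  intro k
  induction k with
  | zero =>
    intro x y h
    have h' : (x, x + 1) = (y, y + 1) := h
    have hxy : x = y := congrArg Prod.fst h'
    subst hxy
    exact ⟨rfl, by omega⟩
  | succ k ih =>
    rintro x y ⟨r, hs, hrest⟩
    obtain ⟨hroot, ⟨hr1, hr2⟩, hsub, himg⟩ := hs
    have hx : x ∈ D.G1 := hsub (Finset.mem_Ico.2 ⟨le_refl x, by omega⟩)
    have hIco : Finset.Ico x (x + 1) = {x} := by
      ext m; simp [Finset.mem_Ico]; try omega
    have himg' : Finset.Ico r.1 r.2 = Finset.Ico (D.T x) (D.T x + 1) := by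
      rw [← himg]
      simp only [hIco, Finset.image_singleton]
      ext m; simp [Finset.mem_Ico]; try omega
    obtain ⟨e1, e2⟩ := Ico_eq_Ico hr1 himg'
    have hr : r = (D.T x, D.T x + 1) := Prod.ext e1 e2
    rw [hr] at hrest
    exact chain_succ hx rfl (ih _ _ hrest)

lemma L2 {D : BDTriple n} :
    ∀ k (x y : ℕ), stepIter D k (x, x + 2) (y, y + 2) →
      (Chain D x k y ∧ Chain D (x + 1) k (y + 1)) ∨
      (Chain D x k (y + 1) ∧ Chain D (x + 1) k y) := by
  intro k
  induction k with
  | zero =>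
    intro x y h
    have h' : (x, x + 2) = (y, y + 2) := h
    have hxy : x = y := congrArg Prod.fst h'
    subst hxy
    exact Or.inl ⟨⟨rfl, by omega⟩, ⟨rfl, by omega⟩⟩
  | succ k ih =>
    rintro x y ⟨r, hs, hrest⟩
    have hlen := step_len hs
    obtain ⟨hroot, ⟨hr1, hr2⟩, hsub, himg⟩ := hs
    have hx : x ∈ D.G1 := hsub (Finset.mem_Ico.2 ⟨le_refl x, by omega⟩)
    have hx1 : x + 1 ∈ D.G1 := hsub (Finset.mem_Ico.2 ⟨by omega, by omega⟩)
    have hr2' : r.2 = r.1 + 2 := by simp at hlen; omega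
    have hne : D.T x ≠ D.T (x + 1) := fun hteq => by
      have := D.Tinj x hx (x + 1) hx1 hteq
      omega
    have hm1 : D.T x ∈ Finset.Ico r.1 r.2 :=
      himg ▸ Finset.mem_image_of_mem _ (Finset.mem_Ico.2 ⟨le_refl x, by omega⟩)
    have hm2 : D.T (x + 1) ∈ Finset.Ico r.1 r.2 :=
      himg ▸ Finset.mem_image_of_mem _ (Finset.mem_Ico.2 ⟨by omega, by omega⟩)
    rw [Finset.mem_Ico] at hm1 hm2
    have hcase : (D.T x = r.1 ∧ D.T (x + 1) = r.1 + 1) ∨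
        (D.T x = r.1 + 1 ∧ D.T (x + 1) = r.1) := by omega
    have hr' : r = (r.1, r.1 + 2) := Prod.ext rfl hr2'
    rw [hr'] at hrest
    rcases ih r.1 y hrest with ⟨hA, hB⟩ | ⟨hA, hB⟩ <;> rcases hcase with ⟨h1, h2⟩ | ⟨h1, h2⟩
    · exact Or.inl ⟨chain_succ hx h1 hA, chain_succ hx1 h2 hB⟩
    · exact Or.inr ⟨chain_succ hx h1 hB, chain_succ hx1 h2 hA⟩
    · exact Or.inr ⟨chain_succ hx h1 hA, chain_succ hx1 h2 hB⟩
    · exact Or.inl ⟨chain_succ hx h1 hB, chain_succ hx1 h2 hA⟩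

end Comb
section PP
variable {n : ℕ}

lemma mem_roots {x y : ℕ} : (x, y) ∈ roots n ↔ x < y ∧ y < n := by
  simp only [roots, Finset.mem_filter, Finset.mem_product, Finset.mem_range]
  constructor
  · rintro ⟨⟨h1, h2⟩, h3⟩; exact ⟨h3, h2⟩
  · rintro ⟨h1, h2⟩; exact ⟨⟨by omega, h2⟩, h1⟩

lemma mem_pp {D : BDTriple n} {p q : ℕ × ℕ} :
    (p, q) ∈ precPairs D ↔ (p ∈ roots n ∧ q ∈ roots n) ∧ prec D p q := by
  classical
  simp [precPairs, Finset.mem_filter, Finset.mem_product]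

lemma pp_len {D : BDTriple n} {p q : ℕ × ℕ} (h : (p, q) ∈ precPairs D) :
    p.1 < p.2 ∧ p.2 < n ∧ q.1 < q.2 ∧ q.2 < n ∧ p.1 + q.2 = p.2 + q.1 := by
  rw [mem_pp] at h
  obtain ⟨⟨hp, hq⟩, k, hst⟩ := h
  obtain ⟨p1, p2⟩ := p
  obtain ⟨q1, q2⟩ := q
  rw [mem_roots] at hp hq
  have := stepIter_len _ _ _ hst
  exact ⟨hp.1, hp.2, hq.1, hq.2, this⟩

lemma pp_prec {D : BDTriple n} {p q : ℕ × ℕ} (h : (p, q) ∈ precPairs D) : prec D p q :=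
  (mem_pp.1 h).2

lemma pp_intro_one {D : BDTriple n} {x y : ℕ} (hx : x ∈ D.G1) (hxn : x + 1 < n)
    (hT : D.T x = y) : ((x, x + 1), (y, y + 1)) ∈ precPairs D := by
  have hy1 : y + 1 < n := by have := D.hG2 _ (D.Tmem x hx); omega
  have hIx : Finset.Ico x (x + 1) = {x} := by ext m; simp [Finset.mem_Ico]; try omega
  have hIy : Finset.Ico y (y + 1) = {y} := by ext m; simp [Finset.mem_Ico]; try omega
  rw [mem_pp]
  refine ⟨⟨mem_roots.2 ⟨by omega, hxn⟩, mem_roots.2 ⟨by omega, hy1⟩⟩, 0, (y, y + 1), ?_, rfl⟩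
  refine ⟨⟨by omega, hxn⟩, ⟨by omega, hy1⟩, ?_, ?_⟩
  · rw [hIx]; simpa using hx
  · rw [hIx, hIy, Finset.image_singleton, hT]

end PP

section Contra
variable {n : ℕ} {D : BDTriple n} {a c : ℕ}

lemma step_ac (ha : a ∈ D.G1) (ha1 : a + 1 ∈ D.G1)
    (hTa : D.T a = c + 1) (hTa1 : D.T (a + 1) = c) :
    step D (a, a + 2) (c, c + 2) := by
  have ha2n : a + 2 < n := by have := D.hG1 _ ha1; omega
  have hc2n : c + 2 < n := by have := D.hG2 _ (D.Tmem a ha); omega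
  refine ⟨⟨by omega, ha2n⟩, ⟨by omega, hc2n⟩, ?_, ?_⟩
  · intro x hx
    rw [Finset.mem_Ico] at hx
    rcases (by omega : x = a ∨ x = a + 1) with rfl | rfl
    · exact ha
    · exact ha1
  · have hIa : Finset.Ico a (a + 2) = {a, a + 1} := by ext m; simp [Finset.mem_Ico]; omega
    rw [hIa, Finset.image_insert, Finset.image_singleton, hTa, hTa1]
    ext m; simp [Finset.mem_Ico]; omega

/-- `T` fixing a simple root contradicts nilpotency. -/
lemma not_T_fix {x : ℕ} (hx : x ∈ D.G1) (hT : D.T x = x) : False :=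
  chain_cycle (chain_one hx hT) le_rfl

lemma hE1 (ha1 : a + 1 ∈ D.G1) (hTa1 : D.T (a + 1) = c) : c ≠ a + 1 := by
  rintro rfl
  exact not_T_fix ha1 hTa1

lemma hE2 (ha : a ∈ D.G1) (hTa : D.T a = c + 1) : c + 1 ≠ a := by
  rintro h
  exact not_T_fix ha (hTa.trans h)

lemma contra1 {m : ℕ} (ha : a ∈ D.G1) (ha1 : a + 1 ∈ D.G1)
    (hTa : D.T a = c + 1) (hTa1 : D.T (a + 1) = c)
    (h1 : ((m, c), (c + 1, c + 2)) ∈ precPairs D)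
    (h2 : ((a, a + 2), (m, c + 1)) ∈ precPairs D) : False := by
  have hl1 := pp_len h1
  simp only at hl1
  have hc : c = m + 1 := by omega
  subst hc
  obtain ⟨k, hst⟩ := pp_prec h2
  obtain ⟨r, hsr, hrest⟩ := hst
  have hr : r = (m + 1, m + 3) := by
    have := step_det hsr (step_ac ha ha1 hTa hTa1)
    rw [this]
  rw [hr] at hrest
  obtain ⟨k, rfl⟩ : ∃ k', k = k' + 1 := by
    rcases k with _ | k'
    · exfalso
      have h' : ((m + 1 : ℕ), (m + 3 : ℕ)) = ((m : ℕ), m + 2) := hrest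
      have := congrArg Prod.fst h'
      omega
    · exact ⟨k', rfl⟩
  have hL2 := L2 (k + 1) (m + 1) m (by
    have : ((m + 1 : ℕ), m + 1 + 2) = ((m + 1 : ℕ), m + 3) := by norm_num
    rw [this]; exact hrest)
  obtain ⟨j, hstj⟩ := pp_prec h1
  have hP1 : Chain D m (j + 1) (m + 2) := L1 (j + 1) m (m + 2) (by
    have : ((m + 2 : ℕ), m + 2 + 1) = ((m + 2 : ℕ), m + 3) := by norm_num
    rw [this]; exact hstj)
  rcases hL2 with ⟨hA, hB⟩ | ⟨hA, hB⟩
  · exact chain_cycle (chain_comp (chain_comp hA hP1) hB) (by omega)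
  · exact chain_cycle hA (by omega)

lemma contra2 {m : ℕ} (ha : a ∈ D.G1) (ha1 : a + 1 ∈ D.G1)
    (hTa : D.T a = c + 1) (hTa1 : D.T (a + 1) = c)
    (h3 : ((a, a + 2), (c + 1, m)) ∈ precPairs D)
    (h4 : ((c + 2, m), (c, c + 1)) ∈ precPairs D) : False := by
  have hl3 := pp_len h3
  simp only at hl3
  have hm : m = c + 3 := by omega
  subst hm
  obtain ⟨k, hst⟩ := pp_prec h3
  obtain ⟨r, hsr, hrest⟩ := hst
  have hr : r = (c, c + 2) := step_det hsr (step_ac ha ha1 hTa hTa1)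
  rw [hr] at hrest
  obtain ⟨k, rfl⟩ : ∃ k', k = k' + 1 := by
    rcases k with _ | k'
    · exfalso
      have h' : ((c : ℕ), (c + 2 : ℕ)) = ((c + 1 : ℕ), c + 3) := hrest
      have := congrArg Prod.fst h'
      omega
    · exact ⟨k', rfl⟩
  have hL2 := L2 (k + 1) c (c + 1) (by
    have : ((c + 1 : ℕ), c + 1 + 2) = ((c + 1 : ℕ), c + 3) := by norm_num
    rw [show ((c + 1 : ℕ), c + 1 + 2) = ((c + 1 : ℕ), c + 3) from by norm_num]
    exact hrest)
  obtain ⟨j, hstj⟩ := pp_prec h4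
  have hP4 : Chain D (c + 2) (j + 1) c := L1 (j + 1) (c + 2) c (by
    rw [show ((c + 2 : ℕ), c + 2 + 1) = ((c + 2 : ℕ), c + 3) from by norm_num]
    exact hstj)
  rcases hL2 with ⟨hA, hB⟩ | ⟨hA, hB⟩
  · exact chain_cycle (chain_comp (chain_comp hB hP4) hA) (by omega)
  · exact chain_cycle hB (by omega)

end Contra
section Mat
variable {n : ℕ}

lemma sMat_apply (s : ℕ → ℕ → ℂ) (i k j l : Fin n) :
    sMat n s (i, k) (j, l) = if (i : ℕ) = j ∧ (k : ℕ) = l then s i k else 0 := by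
  classical
  rw [sMat]
  simp only [Matrix.sum_apply, Matrix.smul_apply, tens, Eu, smul_eq_mul]
  rw [Finset.sum_eq_single (i : ℕ)]
  · rw [Finset.sum_eq_single (k : ℕ)]
    · by_cases h1 : (i : ℕ) = j <;> by_cases h2 : (k : ℕ) = l <;>
        simp [h1, h2, eq_comm]
    · intro y _ hy
      simp [hy.symm]
    · intro h
      exact absurd (Finset.mem_range.2 k.isLt) h
  · intro x _ hx
    simp [hx.symm]
  · intro h
    exact absurd (Finset.mem_range.2 i.isLt) h

lemma rstMat_apply (i k j l : Fin n) :
    rstMat n (i, k) (j, l) =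
      (if (i : ℕ) = j ∧ (k : ℕ) = l ∧ (i : ℕ) = k then (1 / 2 : ℂ) else 0)
      + (if (i : ℕ) = l ∧ (k : ℕ) = j ∧ (j : ℕ) < (i : ℕ) then (1 : ℂ) else 0) := by
  classical
  rw [rstMat]
  simp only [Matrix.add_apply, Matrix.smul_apply, Matrix.sum_apply, tens, Eu, smul_eq_mul]
  congr 1
  · rw [Finset.sum_eq_single (i : ℕ)]
    · split_ifs <;> first | (exfalso; omega) | ring
    · intro x _ hx
      simp [hx.symm]
    · intro h
      exact absurd (Finset.mem_range.2 i.isLt) h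
  · have key : ∀ x ∈ roots n,
        ((if (i : ℕ) = x.2 ∧ (j : ℕ) = x.1 then (1:ℂ) else 0) *
          (if (k : ℕ) = x.1 ∧ (l : ℕ) = x.2 then (1:ℂ) else 0))
        = if x = (((j : ℕ), (i : ℕ)) : ℕ × ℕ) then
            (if (i : ℕ) = l ∧ (k : ℕ) = j then (1:ℂ) else 0) else 0 := by
      intro x _
      obtain ⟨x1, x2⟩ := x
      simp only [Prod.mk.injEq]
      split_ifs <;> first | (exfalso; omega) | ring
    rw [Finset.sum_congr rfl key, Finset.sum_ite_eq']
    by_cases hm : (((j : ℕ), (i : ℕ)) : ℕ × ℕ) ∈ roots n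
    · rw [if_pos hm]
      have hji := (mem_roots.1 hm).1
      by_cases h2 : (i : ℕ) = l ∧ (k : ℕ) = j
      · rw [if_pos h2, if_pos ⟨h2.1, h2.2, hji⟩]
      · rw [if_neg h2, if_neg (by tauto)]
    · rw [if_neg hm, if_neg (fun hc => hm (mem_roots.2 ⟨hc.2.2, i.isLt⟩))]

lemma aMat_apply (D : BDTriple n) (CC : ℕ × ℕ → ℕ × ℕ → Bool) (i k j l : Fin n) :
    aMat D CC (i, k) (j, l) =
      (if (((j : ℕ), (i : ℕ)), ((k : ℕ), (l : ℕ))) ∈ precPairs D then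
        ((-1 : ℂ) ^ Cnum CC ((j : ℕ), (i : ℕ)) ((k : ℕ), (l : ℕ))) else 0)
      - (if (((l : ℕ), (k : ℕ)), ((i : ℕ), (j : ℕ))) ∈ precPairs D then
        ((-1 : ℂ) ^ Cnum CC ((l : ℕ), (k : ℕ)) ((i : ℕ), (j : ℕ))) else 0) := by
  classical
  rw [aMat]
  simp only [Matrix.sum_apply, Matrix.smul_apply, Matrix.sub_apply, tens, Eu, smul_eq_mul]
  have key : ∀ x ∈ precPairs D,
      ((-1 : ℂ) ^ Cnum CC x.1 x.2 *
        ((if (i : ℕ) = x.1.2 ∧ (j : ℕ) = x.1.1 then (1:ℂ) else 0) *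
          (if (k : ℕ) = x.2.1 ∧ (l : ℕ) = x.2.2 then (1:ℂ) else 0)
        - (if (i : ℕ) = x.2.1 ∧ (j : ℕ) = x.2.2 then (1:ℂ) else 0) *
          (if (k : ℕ) = x.1.2 ∧ (l : ℕ) = x.1.1 then (1:ℂ) else 0)))
      = (if x = ((((j : ℕ), (i : ℕ)), ((k : ℕ), (l : ℕ)))) then
          (-1 : ℂ) ^ Cnum CC x.1 x.2 else 0)
        - (if x = ((((l : ℕ), (k : ℕ)), ((i : ℕ), (j : ℕ)))) then
          (-1 : ℂ) ^ Cnum CC x.1 x.2 else 0) := by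
    intro x _
    obtain ⟨⟨x11, x12⟩, x21, x22⟩ := x
    simp only [Prod.mk.injEq]
    split_ifs <;> first | (exfalso; omega) | ring
  rw [Finset.sum_congr rfl key, Finset.sum_sub_distrib, Finset.sum_ite_eq', Finset.sum_ite_eq']

lemma rTs_apply (D : BDTriple n) (CC : ℕ × ℕ → ℕ × ℕ → Bool) (s : ℕ → ℕ → ℂ)
    (i k j l : Fin n) :
    rTs D CC s (i, k) (j, l) =
      (if (i : ℕ) = j ∧ (k : ℕ) = l then s i k else 0)
      + ((if (((j : ℕ), (i : ℕ)), ((k : ℕ), (l : ℕ))) ∈ precPairs D then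
          ((-1 : ℂ) ^ Cnum CC ((j : ℕ), (i : ℕ)) ((k : ℕ), (l : ℕ))) else 0)
        - (if (((l : ℕ), (k : ℕ)), ((i : ℕ), (j : ℕ))) ∈ precPairs D then
          ((-1 : ℂ) ^ Cnum CC ((l : ℕ), (k : ℕ)) ((i : ℕ), (j : ℕ))) else 0))
      + ((if (i : ℕ) = j ∧ (k : ℕ) = l ∧ (i : ℕ) = k then (1 / 2 : ℂ) else 0)
        + (if (i : ℕ) = l ∧ (k : ℕ) = j ∧ (j : ℕ) < (i : ℕ) then (1 : ℂ) else 0)) := by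
  rw [rTs]
  simp only [Matrix.add_apply]
  rw [sMat_apply, rstMat_apply, aMat_apply]

end Mat
section Mul
variable {n : ℕ}

lemma mul12_13 (x y : M2 n) (p q : Fin n × Fin n × Fin n) :
    (emb12 x * emb13 y) p q
      = ∑ m : Fin n, x (p.1, p.2.1) (m, q.2.1) * y (m, p.2.2) (q.1, q.2.2) := by
  rw [Matrix.mul_apply]
  rw [Fintype.sum_prod_type]
  refine Finset.sum_congr rfl fun m _ => ?_
  rw [Fintype.sum_prod_type]
  simp only [emb12, emb13, mul_ite, ite_mul, mul_one, mul_zero, zero_mul, one_mul]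
  rw [Finset.sum_eq_single q.2.1]
  · rw [Finset.sum_eq_single p.2.2]
    · simp
    · intro b _ hb
      simp [Ne.symm hb]
    · simp
  · intro b _ hb
    refine Finset.sum_eq_zero fun m' _ => ?_
    simp [hb]
  · simp

lemma mul23_12 (z w : M2 n) (p q : Fin n × Fin n × Fin n) :
    (emb23 z * emb12 w) p q
      = ∑ m : Fin n, z (p.2.1, p.2.2) (m, q.2.2) * w (p.1, m) (q.1, q.2.1) := by
  rw [Matrix.mul_apply]
  rw [Fintype.sum_prod_type]
  rw [Finset.sum_eq_single p.1]
  · rw [Fintype.sum_prod_type]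
    refine Finset.sum_congr rfl fun m _ => ?_
    simp only [emb23, emb12, mul_ite, ite_mul, mul_one, mul_zero, zero_mul, one_mul]
    rw [Finset.sum_eq_single q.2.2]
    · simp
    · intro b _ hb
      simp [hb]
    · simp
  · intro b _ hb
    rw [Fintype.sum_prod_type]
    refine Finset.sum_eq_zero fun m _ => ?_
    refine Finset.sum_eq_zero fun m' _ => ?_
    simp [emb23, emb12, Ne.symm hb, hb]
  · simp

lemma mul13_23 (x y : M2 n) (p q : Fin n × Fin n × Fin n) :
    (emb13 x * emb23 y) p q
      = ∑ m : Fin n, x (p.1, p.2.2) (q.1, m) * y (p.2.1, m) (q.2.1, q.2.2) := by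
  rw [Matrix.mul_apply]
  rw [Fintype.sum_prod_type]
  rw [Finset.sum_eq_single q.1]
  · rw [Fintype.sum_prod_type]
    rw [Finset.sum_eq_single p.2.1]
    · refine Finset.sum_congr rfl fun m _ => ?_
      simp [emb13, emb23]
    · intro b _ hb
      refine Finset.sum_eq_zero fun m _ => ?_
      simp [emb13, emb23, hb, Ne.symm hb]
    · simp
  · intro b _ hb
    rw [Fintype.sum_prod_type]
    refine Finset.sum_eq_zero fun m _ => ?_
    refine Finset.sum_eq_zero fun m' _ => ?_
    simp [emb13, emb23, hb, Ne.symm hb]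
  · simp

lemma entry3_val (X : M3 n) {x z s y w t : ℕ} (hx : x < n) (hz : z < n) (hs : s < n)
    (hy : y < n) (hw : w < n) (ht : t < n) :
    entry3 X x z s y w t = X (⟨x, hx⟩, ⟨z, hz⟩, ⟨s, hs⟩) (⟨y, hy⟩, ⟨w, hw⟩, ⟨t, ht⟩) := by
  rw [entry3]
  rw [Finset.sum_eq_single ((⟨x, hx⟩, ⟨z, hz⟩, ⟨s, hs⟩) : Fin n × Fin n × Fin n)]
  · rw [Finset.sum_eq_single ((⟨y, hy⟩, ⟨w, hw⟩, ⟨t, ht⟩) : Fin n × Fin n × Fin n)]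
    · simp
    · intro q _ hq
      rw [if_neg]
      rintro ⟨-, -, -, h4, h5, h6⟩
      exact hq (by
        obtain ⟨q1, q2, q3⟩ := q
        simp_all [Prod.ext_iff, Fin.ext_iff])
    · simp
  · intro p _ hp
    refine Finset.sum_eq_zero fun q _ => ?_
    rw [if_neg]
    rintro ⟨h1, h2, h3, -⟩
    exact hp (by
      obtain ⟨p1, p2, p3⟩ := p
      simp_all [Prod.ext_iff, Fin.ext_iff])
  · simp

end Mul
section Main
variable {n : ℕ}

lemma cnum_simple (CC : ℕ × ℕ → ℕ × ℕ → Bool) {p q : ℕ × ℕ}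
    (hp : p.2 = p.1 + 1) : ((-1 : ℂ)) ^ Cnum CC p q = 1 := by
  have h0 : p.2 - p.1 - 1 = 0 := by omega
  simp [Cnum, h0]

lemma pp_len' {D : BDTriple n} {p1 p2 q1 q2 : ℕ}
    (h : ((p1, p2), (q1, q2)) ∈ precPairs D) :
    p1 < p2 ∧ q1 < q2 ∧ p1 + q2 = p2 + q1 := by
  have := pp_len h
  exact ⟨this.1, this.2.2.1, this.2.2.2.2⟩

theorem main' (n : ℕ) (hn : 2 ≤ n) (D : BDTriple n)
    (a c : ℕ) (ha : a ∈ D.G1) (ha1 : a + 1 ∈ D.G1)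
    (hTa : D.T a = c + 1) (hTa1 : D.T (a + 1) = c)
    (CC : ℕ × ℕ → ℕ × ℕ → Bool) (hCC : CCSpec D CC)
    (s : ℕ → ℕ → ℂ) (hs : Admissible D s) :
    entry3 (emb12 (rTs D CC s) * emb13 (rTs D CC s)
        - emb23 (rTs D CC s) * emb12 (rTs D CC s)
        + emb13 (rTs D CC s) * emb23 (rTs D CC s))
      (a + 2) c (c + 1) a (c + 1) (c + 2) = 1 ∧
    prpr3 (emb12 (rTs D CC s) * emb13 (rTs D CC s)
        - emb23 (rTs D CC s) * emb12 (rTs D CC s)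
        + emb13 (rTs D CC s) * emb23 (rTs D CC s)) ≠ 0 := by
  classical
  have ha2n : a + 2 < n := by have := D.hG1 _ ha1; omega
  have han : a < n := by omega
  have ha1n : a + 1 < n := by omega
  have hc2n : c + 2 < n := by have := D.hG2 _ (D.Tmem a ha); rw [hTa] at this; omega
  have hcn : c < n := by omega
  have hc1n : c + 1 < n := by omega
  have hce1 : c ≠ a + 1 := hE1 ha1 hTa1
  have hce2 : c + 1 ≠ a := hE2 ha hTa
  have hPa1 : ((a + 1, a + 2), (c, c + 1)) ∈ precPairs D := pp_intro_one ha1 ha2n hTa1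
  have hPa : ((a, a + 1), (c + 1, c + 2)) ∈ precPairs D := pp_intro_one ha (by omega) hTa
  set F := rTs D CC s with hF
  -- Term 1, first factor
  have f1 : ∀ m : Fin n,
      F (⟨a + 2, ha2n⟩, ⟨c, hcn⟩) (m, ⟨c + 1, hc1n⟩) = if (m : ℕ) = a + 1 then 1 else 0 := by
    intro m
    rw [hF, rTs_apply]
    dsimp only
    rw [if_neg (show ¬((a + 2 : ℕ) = (m : ℕ) ∧ (c : ℕ) = c + 1) by omega),
      if_neg (show ¬(((c + 1, c), (a + 2, (m : ℕ))) ∈ precPairs D) from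
        fun h => by have := (pp_len' h).1; omega),
      if_neg (show ¬((a + 2 : ℕ) = (m : ℕ) ∧ (c : ℕ) = c + 1 ∧ (a + 2 : ℕ) = c) by omega),
      if_neg (show ¬((a + 2 : ℕ) = c + 1 ∧ (c : ℕ) = (m : ℕ) ∧ (m : ℕ) < a + 2) by omega)]
    by_cases hm : (((m : ℕ), a + 2), (c, c + 1)) ∈ precPairs D
    · have hl := pp_len' hm
      have hma : (m : ℕ) = a + 1 := by omega
      rw [if_pos hm, if_pos hma, cnum_simple CC (show (a + 2 : ℕ) = (m : ℕ) + 1 by omega)]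
      ring
    · rw [if_neg hm, if_neg (fun hM : (m : ℕ) = a + 1 => hm (by rw [hM]; exact hPa1))]
      ring
  -- Term 1, second factor
  have g1 : F (⟨a + 1, ha1n⟩, ⟨c + 1, hc1n⟩) (⟨a, han⟩, ⟨c + 2, hc2n⟩) = 1 := by
    rw [hF, rTs_apply]
    dsimp only
    rw [if_neg (show ¬((a + 1 : ℕ) = a ∧ (c + 1 : ℕ) = c + 2) by omega),
      if_pos hPa, cnum_simple CC (show (a + 1 : ℕ) = a + 1 from rfl),
      if_neg (show ¬(((c + 2, c + 1), (a + 1, a)) ∈ precPairs D) from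
        fun h => by have := (pp_len' h).1; omega),
      if_neg (show ¬((a + 1 : ℕ) = a ∧ (c + 1 : ℕ) = c + 2 ∧ (a + 1 : ℕ) = c + 1) by omega),
      if_neg (show ¬((a + 1 : ℕ) = c + 2 ∧ (c + 1 : ℕ) = a ∧ (a : ℕ) < a + 1) by omega)]
    ring
  -- Term 2 vanishes pointwise
  have f2 : ∀ m : Fin n,
      F (⟨c, hcn⟩, ⟨c + 1, hc1n⟩) (m, ⟨c + 2, hc2n⟩)
        * F (⟨a + 2, ha2n⟩, m) (⟨a, han⟩, ⟨c + 1, hc1n⟩) = 0 := by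
    intro m
    rw [mul_eq_zero]
    by_cases h1 : (((m : ℕ), c), (c + 1, c + 2)) ∈ precPairs D
    · right
      have h2 : ¬(((a, a + 2), ((m : ℕ), c + 1)) ∈ precPairs D) :=
        fun h2 => contra1 ha ha1 hTa hTa1 h1 h2
      rw [hF, rTs_apply]
      dsimp only
      rw [if_neg (show ¬((a + 2 : ℕ) = a ∧ (m : ℕ) = c + 1) by omega),
        if_neg h2,
        if_neg (show ¬(((c + 1, (m : ℕ)), (a + 2, a)) ∈ precPairs D) from
          fun h => by have := (pp_len' h).2.1; omega),
        if_neg (show ¬((a + 2 : ℕ) = a ∧ (m : ℕ) = c + 1 ∧ (a + 2 : ℕ) = (m : ℕ)) by omega),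
        if_neg (show ¬((a + 2 : ℕ) = c + 1 ∧ (m : ℕ) = a ∧ (a : ℕ) < a + 2) by omega)]
      ring
    · left
      rw [hF, rTs_apply]
      dsimp only
      rw [if_neg (show ¬((c : ℕ) = (m : ℕ) ∧ (c + 1 : ℕ) = c + 2) by omega),
        if_neg h1,
        if_neg (show ¬(((c + 2, c + 1), (c, (m : ℕ))) ∈ precPairs D) from
          fun h => by have := (pp_len' h).1; omega),
        if_neg (show ¬((c : ℕ) = (m : ℕ) ∧ (c + 1 : ℕ) = c + 2 ∧ (c : ℕ) = c + 1) by omega),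
        if_neg (show ¬((c : ℕ) = c + 2 ∧ (c + 1 : ℕ) = (m : ℕ) ∧ (m : ℕ) < c) by omega)]
      ring
  -- Term 3 vanishes pointwise
  have f3 : ∀ m : Fin n,
      F (⟨a + 2, ha2n⟩, ⟨c + 1, hc1n⟩) (⟨a, han⟩, m)
        * F (⟨c, hcn⟩, m) (⟨c + 1, hc1n⟩, ⟨c + 2, hc2n⟩) = 0 := by
    intro m
    rw [mul_eq_zero]
    by_cases h4 : (((c + 2, (m : ℕ)), (c, c + 1)) ∈ precPairs D)
    · left
      have h3 : ¬(((a, a + 2), (c + 1, (m : ℕ))) ∈ precPairs D) :=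
        fun h3 => contra2 ha ha1 hTa hTa1 h3 h4
      rw [hF, rTs_apply]
      dsimp only
      rw [if_neg (show ¬((a + 2 : ℕ) = a ∧ (c + 1 : ℕ) = (m : ℕ)) by omega),
        if_neg h3,
        if_neg (show ¬((((m : ℕ), c + 1), (a + 2, a)) ∈ precPairs D) from
          fun h => by have := (pp_len' h).2.1; omega),
        if_neg (show ¬((a + 2 : ℕ) = a ∧ (c + 1 : ℕ) = (m : ℕ) ∧ (a + 2 : ℕ) = c + 1) by omega),
        if_neg (show ¬((a + 2 : ℕ) = (m : ℕ) ∧ (c + 1 : ℕ) = a ∧ (a : ℕ) < a + 2) by omega)]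
      ring
    · right
      rw [hF, rTs_apply]
      dsimp only
      rw [if_neg (show ¬((c : ℕ) = c + 1 ∧ (m : ℕ) = c + 2) by omega),
        if_neg (show ¬(((c + 1, c), ((m : ℕ), c + 2)) ∈ precPairs D) from
          fun h => by have := (pp_len' h).1; omega),
        if_neg h4,
        if_neg (show ¬((c : ℕ) = c + 1 ∧ (m : ℕ) = c + 2 ∧ (c : ℕ) = (m : ℕ)) by omega),
        if_neg (show ¬((c : ℕ) = c + 2 ∧ (m : ℕ) = c + 1 ∧ (c + 1 : ℕ) < c) by omega)]
      ring
  -- the big entry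
  have hXPQ : (emb12 F * emb13 F - emb23 F * emb12 F + emb13 F * emb23 F)
      ((⟨a + 2, ha2n⟩, ⟨c, hcn⟩, ⟨c + 1, hc1n⟩))
      ((⟨a, han⟩, ⟨c + 1, hc1n⟩, ⟨c + 2, hc2n⟩)) = 1 := by
    rw [Matrix.add_apply, Matrix.sub_apply, mul12_13, mul23_12, mul13_23]
    dsimp only
    have hT1 : (∑ m : Fin n, F (⟨a + 2, ha2n⟩, ⟨c, hcn⟩) (m, ⟨c + 1, hc1n⟩)
        * F (m, ⟨c + 1, hc1n⟩) (⟨a, han⟩, ⟨c + 2, hc2n⟩)) = 1 := by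
      rw [Finset.sum_eq_single (⟨a + 1, ha1n⟩ : Fin n)]
      · rw [f1, g1]
        simp
      · intro m _ hm
        rw [f1, if_neg (fun h : (m : ℕ) = a + 1 => hm (Fin.ext h)), zero_mul]
      · simp
    rw [hT1, Finset.sum_eq_zero fun (m : Fin n) _ => f2 m,
      Finset.sum_eq_zero fun (m : Fin n) _ => f3 m]
    ring
  refine ⟨?_, ?_⟩
  · rw [entry3_val _ ha2n hcn hc1n han hc1n hc2n]
    exact hXPQ
  · intro h0
    have hz := congrFun (congrFun h0 ((⟨a + 2, ha2n⟩, ⟨c, hcn⟩, ⟨c + 1, hc1n⟩)))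
      ((⟨a, han⟩, ⟨c + 1, hc1n⟩, ⟨c + 2, hc2n⟩))
    simp only [Matrix.zero_apply] at hz
    have hv : prpr3 (emb12 F * emb13 F - emb23 F * emb12 F + emb13 F * emb23 F)
        ((⟨a + 2, ha2n⟩, ⟨c, hcn⟩, ⟨c + 1, hc1n⟩))
        ((⟨a, han⟩, ⟨c + 1, hc1n⟩, ⟨c + 2, hc2n⟩))
        = (emb12 F * emb13 F - emb23 F * emb12 F + emb13 F * emb23 F)
        ((⟨a + 2, ha2n⟩, ⟨c, hcn⟩, ⟨c + 1, hc1n⟩))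
        ((⟨a, han⟩, ⟨c + 1, hc1n⟩, ⟨c + 2, hc2n⟩)) := by
      have e1 : ((⟨a + 2, ha2n⟩ : Fin n) = (⟨a, han⟩ : Fin n)) = False :=
        eq_false (by simp only [Fin.mk.injEq]; omega)
      have e2 : ((⟨c, hcn⟩ : Fin n) = (⟨c + 1, hc1n⟩ : Fin n)) = False :=
        eq_false (by simp only [Fin.mk.injEq]; omega)
      have e3 : ((⟨c + 1, hc1n⟩ : Fin n) = (⟨c + 2, hc2n⟩ : Fin n)) = False :=
        eq_false (by simp only [Fin.mk.injEq]; omega)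
      simp only [prpr3, pr1, pr2, pr3]
      simp only [e1, e2, e3, if_false, mul_zero, zero_mul, sub_zero]
    rw [hv, hXPQ] at hz
    exact one_ne_zero hz

end Main
/-- **Lemma `nc1`.** If the BD triple does not preserve orientation,
say `T(α_a) = α_{c+1}` and `T(α_{a+1}) = α_c` (0-based), then the cubic expression in
`r̃ = r_{T,s}` has the coefficient of `e_{a+2,a} ⊗ e_{c,c+1} ⊗ e_{c+1,c+2}` equal to `1`;
in particular its projection `(pr⊗pr⊗pr)` is nonzero. -/
theorem orientation_reversal_obstruction (n : ℕ) (hn : 2 ≤ n) (D : BDTriple n)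
    (a c : ℕ) (ha : a ∈ D.G1) (ha1 : a + 1 ∈ D.G1)
    (hTa : D.T a = c + 1) (hTa1 : D.T (a + 1) = c)
    (CC : ℕ × ℕ → ℕ × ℕ → Bool) (hCC : CCSpec D CC)
    (s : ℕ → ℕ → ℂ) (hs : Admissible D s) :
    entry3 (emb12 (rTs D CC s) * emb13 (rTs D CC s)
        - emb23 (rTs D CC s) * emb12 (rTs D CC s)
        + emb13 (rTs D CC s) * emb23 (rTs D CC s))
      (a + 2) c (c + 1) a (c + 1) (c + 2) = 1 ∧
    prpr3 (emb12 (rTs D CC s) * emb13 (rTs D CC s)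
        - emb23 (rTs D CC s) * emb12 (rTs D CC s)
        + emb13 (rTs D CC s) * emb23 (rTs D CC s)) ≠ 0 := main' n hn D a c ha ha1 hTa hTa1 CC hCC s hs
end
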